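/- arXiv:1512.02174 — 7 statements merged into one kernel-verified Lean document; each statement's English description precedes it below -/
import Mathlib

section
/- Let f: [-1,1] → ℝ and g: [-1,1] × [-1,1] → ℝ be k times continuously differentiable functions such that g(t,t) = 0 for every t ∈ [-1,1], and such that for every t ∈ [-1,1] and every j = 1,…,k the j-th derivative of f at t equals the j-th partial derivative of the map s ↦ g(s,t) evaluated at s = t. Then for every u ∈ (-1,1) and every j = 1,…,k, the j-th partial derivative of the map t ↦ g(u,t) evaluated at t = u equals minus the j-th partial derivative of the map s ↦ g(s,u) evaluated at s = u. -/
/-! Write `∂₁, ∂₂` for the partial derivatives of `G (s, t) = g s t`. Differentiating `t ↦ H (t, t)`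
gives `(∂₁ H + ∂₂ H) (t, t)`; for `H = ∂₂^m ∂₁^n G`, Schwarz's theorem turns this into the recursion
`∂₂^(m+1) ∂₁^n G = (d/dt) (∂₂^m ∂₁^n G) - ∂₂^m ∂₁^(n+1) G` on the diagonal. As `∂₁^n G (t, t) = f⁽ⁿ⁾ t`
for `n ≥ 1`, induction on `m` shows that the mixed derivatives `∂₂^(m+1) ∂₁^n G` with `n ≥ 1` vanish
on the diagonal, and then, starting from `G (t, t) = 0`, that `∂₂^m G (t, t) = -f⁽ᵐ⁾ t`. -/

open Set Filter Topology

theorem iteratedDerivWithin_of_mem_nhds {𝕜 F : Type*} [NontriviallyNormedField 𝕜]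
    [NormedAddCommGroup F] [NormedSpace 𝕜 F] {s : Set 𝕜} {x : 𝕜} (hs : s ∈ 𝓝 x)
    (φ : 𝕜 → F) (n : ℕ) : iteratedDerivWithin n φ s x = iteratedDeriv n φ x := by
  rw [← iteratedDerivWithin_univ, iteratedDerivWithin_eq_iteratedFDerivWithin,
    iteratedDerivWithin_eq_iteratedFDerivWithin,
    iteratedFDerivWithin_congr_set (eventuallyEq_univ.mpr hs)]

-- Partial derivatives as derivatives of slices, so that iterated derivatives of a slice are
-- iterates of `partialFst` / `partialSnd` with no differentiability assumption.
noncomputable def partialFst (F : ℝ × ℝ → ℝ) (p : ℝ × ℝ) : ℝ :=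
  deriv (fun s => F (s, p.2)) p.1

noncomputable def partialSnd (F : ℝ × ℝ → ℝ) (p : ℝ × ℝ) : ℝ :=
  deriv (fun t => F (p.1, t)) p.2

theorem iteratedDeriv_slice_fst (F : ℝ × ℝ → ℝ) (b : ℝ) (n : ℕ) :
    iteratedDeriv n (fun s => F (s, b)) = fun s => partialFst^[n] F (s, b) := by
  induction n with
  | zero => rfl
  | succ n ih =>
    rw [iteratedDeriv_succ, ih, Function.iterate_succ_apply']
    rfl

theorem iteratedDeriv_slice_snd (F : ℝ × ℝ → ℝ) (a : ℝ) (n : ℕ) :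
    iteratedDeriv n (fun t => F (a, t)) = fun t => partialSnd^[n] F (a, t) := by
  induction n with
  | zero => rfl
  | succ n ih =>
    rw [iteratedDeriv_succ, ih, Function.iterate_succ_apply']
    rfl

theorem Filter.EventuallyEq.partialFst_eq {F G : ℝ × ℝ → ℝ} {p : ℝ × ℝ} (h : F =ᶠ[𝓝 p] G) :
    partialFst F p = partialFst G p :=
  (h.comp_tendsto ((continuous_id.prodMk continuous_const).tendsto' p.1 p rfl)).deriv_eq

theorem Filter.EventuallyEq.partialSnd_eq {F G : ℝ × ℝ → ℝ} {p : ℝ × ℝ} (h : F =ᶠ[𝓝 p] G) :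
    partialSnd F p = partialSnd G p :=
  (h.comp_tendsto ((continuous_const.prodMk continuous_id).tendsto' p.2 p rfl)).deriv_eq

theorem HasFDerivAt.partialFst_eq {F : ℝ × ℝ → ℝ} {L : ℝ × ℝ →L[ℝ] ℝ} {p : ℝ × ℝ}
    (h : HasFDerivAt F L p) : partialFst F p = L (1, 0) :=
  (h.comp_hasDerivAt p.1 ((hasDerivAt_id p.1).prodMk (hasDerivAt_const p.1 p.2))).deriv

theorem HasFDerivAt.partialSnd_eq {F : ℝ × ℝ → ℝ} {L : ℝ × ℝ →L[ℝ] ℝ} {p : ℝ × ℝ}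
    (h : HasFDerivAt F L p) : partialSnd F p = L (0, 1) :=
  (h.comp_hasDerivAt p.2 ((hasDerivAt_const p.2 p.1).prodMk (hasDerivAt_id p.2))).deriv

theorem DifferentiableAt.hasDerivAt_diag {F : ℝ × ℝ → ℝ} {t : ℝ}
    (hF : DifferentiableAt ℝ F (t, t)) :
    HasDerivAt (fun s => F (s, s)) (partialFst F (t, t) + partialSnd F (t, t)) t := by
  rw [hF.hasFDerivAt.partialFst_eq, hF.hasFDerivAt.partialSnd_eq, ← map_add,
    Prod.mk_add_mk, add_zero, zero_add]
  exact hF.hasFDerivAt.comp_hasDerivAt (f := fun s => (s, s)) t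
    ((hasDerivAt_id t).prodMk (hasDerivAt_id t))

section
variable {U : Set (ℝ × ℝ)}

theorem contDiffOn_partialFst (hU : IsOpen U) {F : ℝ × ℝ → ℝ} {m : ℕ}
    (hF : ContDiffOn ℝ (m + 1 : ℕ) F U) : ContDiffOn ℝ m (partialFst F) U := by
  refine ((hF.fderiv_of_isOpen hU (by push_cast; exact le_rfl)).clm_apply
    (contDiffOn_const (c := ((1 : ℝ), (0 : ℝ))))).congr fun p hp => ?_
  exact ((hF.differentiableOn (by simp)).differentiableAt
    (hU.mem_nhds hp)).hasFDerivAt.partialFst_eq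

theorem contDiffOn_partialSnd (hU : IsOpen U) {F : ℝ × ℝ → ℝ} {m : ℕ}
    (hF : ContDiffOn ℝ (m + 1 : ℕ) F U) : ContDiffOn ℝ m (partialSnd F) U := by
  refine ((hF.fderiv_of_isOpen hU (by push_cast; exact le_rfl)).clm_apply
    (contDiffOn_const (c := ((0 : ℝ), (1 : ℝ))))).congr fun p hp => ?_
  exact ((hF.differentiableOn (by simp)).differentiableAt
    (hU.mem_nhds hp)).hasFDerivAt.partialSnd_eq

theorem contDiffOn_iterate_partialFst (hU : IsOpen U) {F : ℝ × ℝ → ℝ} {n m : ℕ}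
    (hF : ContDiffOn ℝ (n + m : ℕ) F U) : ContDiffOn ℝ m (partialFst^[n] F) U := by
  induction n generalizing m with
  | zero => simpa using hF
  | succ n ih =>
    rw [Function.iterate_succ_apply']
    exact contDiffOn_partialFst hU (ih (m := m + 1) (by rwa [← add_assoc, add_right_comm]))

theorem contDiffOn_iterate_partialSnd (hU : IsOpen U) {F : ℝ × ℝ → ℝ} {n m : ℕ}
    (hF : ContDiffOn ℝ (n + m : ℕ) F U) : ContDiffOn ℝ m (partialSnd^[n] F) U := by
  induction n generalizing m with
  | zero => simpa using hF
  | succ n ih =>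
    rw [Function.iterate_succ_apply']
    exact contDiffOn_partialSnd hU (ih (m := m + 1) (by rwa [← add_assoc, add_right_comm]))

theorem partialFst_partialSnd_comm (hU : IsOpen U) {F : ℝ × ℝ → ℝ} (hF : ContDiffOn ℝ 2 F U)
    {p : ℝ × ℝ} (hp : p ∈ U) : partialFst (partialSnd F) p = partialSnd (partialFst F) p := by
  have hFp : ContDiffAt ℝ 2 F p := hF.contDiffAt (hU.mem_nhds hp)
  have hdiff : ∀ᶠ q in 𝓝 p, HasFDerivAt F (fderiv ℝ F q) q :=
    (hFp.eventually (by simp)).mono fun q hq => (hq.differentiableAt (by simp)).hasFDerivAt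
  have hF' : HasFDerivAt (fderiv ℝ F) (fderiv ℝ (fderiv ℝ F) p) p :=
    ((hFp.fderiv_right (m := 1) le_rfl).differentiableAt one_ne_zero).hasFDerivAt
  have hsnd := (hF'.clm_apply (hasFDerivAt_const ((0 : ℝ), (1 : ℝ)) p)).partialFst_eq
  have hfst := (hF'.clm_apply (hasFDerivAt_const ((1 : ℝ), (0 : ℝ)) p)).partialSnd_eq
  have hsnd_eq : partialSnd F =ᶠ[𝓝 p] fun q => fderiv ℝ F q (0, 1) :=
    hdiff.mono fun q hq => hq.partialSnd_eq
  have hfst_eq : partialFst F =ᶠ[𝓝 p] fun q => fderiv ℝ F q (1, 0) :=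
    hdiff.mono fun q hq => hq.partialFst_eq
  rw [hsnd_eq.partialFst_eq, hfst_eq.partialSnd_eq, hsnd, hfst]
  simpa using hFp.isSymmSndFDerivAt (by simp) (1, 0) (0, 1)

theorem partialFst_iterate_partialSnd (hU : IsOpen U) {F : ℝ × ℝ → ℝ} {m : ℕ}
    (hF : ContDiffOn ℝ (m + 1 : ℕ) F U) {p : ℝ × ℝ} (hp : p ∈ U) :
    partialFst (partialSnd^[m] F) p = partialSnd^[m] (partialFst F) p := by
  induction m generalizing p with
  | zero => rfl
  | succ m ih =>
    have hcomm : EqOn (partialFst (partialSnd^[m] F)) (partialSnd^[m] (partialFst F)) U :=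
      fun q hq => ih (hF.of_le (by norm_cast; omega)) hq
    rw [Function.iterate_succ_apply', Function.iterate_succ_apply',
      partialFst_partialSnd_comm hU (contDiffOn_iterate_partialSnd hU hF) hp,
      (hcomm.eventuallyEq_of_mem (hU.mem_nhds hp)).partialSnd_eq]

theorem hasDerivAt_diag_iterate_partialSnd_partialFst (hU : IsOpen U) {G : ℝ × ℝ → ℝ} {k m n : ℕ}
    (hG : ContDiffOn ℝ k G U) (hmn : m + n < k) {t : ℝ} (ht : (t, t) ∈ U) :
    HasDerivAt (fun s => partialSnd^[m] (partialFst^[n] G) (s, s))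
      (partialSnd^[m] (partialFst^[n + 1] G) (t, t)
        + partialSnd^[m + 1] (partialFst^[n] G) (t, t)) t := by
  have hG' : ContDiffOn ℝ (m + 1 : ℕ) (partialFst^[n] G) U :=
    contDiffOn_iterate_partialFst hU (hG.of_le (by norm_cast; omega))
  have hdiff : DifferentiableAt ℝ (partialSnd^[m] (partialFst^[n] G)) (t, t) :=
    ((contDiffOn_iterate_partialSnd hU hG').differentiableOn one_ne_zero).differentiableAt
      (hU.mem_nhds ht)
  rw [Function.iterate_succ_apply' partialFst, Function.iterate_succ_apply' partialSnd,
    ← partialFst_iterate_partialSnd hU hG' ht]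
  exact hdiff.hasDerivAt_diag

theorem iterate_partialSnd_succ_diag (hU : IsOpen U) {G : ℝ × ℝ → ℝ} {k m n : ℕ}
    (hG : ContDiffOn ℝ k G U) (hmn : m + n < k) {t : ℝ} (ht : (t, t) ∈ U) {ψ : ℝ → ℝ}
    (hψ : ψ =ᶠ[𝓝 t] fun s => partialSnd^[m] (partialFst^[n] G) (s, s)) :
    partialSnd^[m + 1] (partialFst^[n] G) (t, t)
      = deriv ψ t - partialSnd^[m] (partialFst^[n + 1] G) (t, t) := by
  rw [((hasDerivAt_diag_iterate_partialSnd_partialFst hU hG hmn ht).congr_of_eventuallyEq hψ).deriv]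
  ring

end

section
variable {U : Set (ℝ × ℝ)} {V : Set ℝ} {G : ℝ × ℝ → ℝ} {f : ℝ → ℝ} {k : ℕ}

theorem diag_iterate_partialSnd_partialFst_eq_zero (hU : IsOpen U) (hV : IsOpen V)
    (hVU : ∀ t ∈ V, (t, t) ∈ U) (hG : ContDiffOn ℝ k G U)
    (hf : ∀ n, 1 ≤ n → n ≤ k → ∀ t ∈ V, partialFst^[n] G (t, t) = iteratedDeriv n f t)
    (m n : ℕ) (hn : 1 ≤ n) (hmn : m + 1 + n ≤ k) {t : ℝ} (ht : t ∈ V) :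
    partialSnd^[m + 1] (partialFst^[n] G) (t, t) = 0 := by
  induction m generalizing n t with
  | zero =>
    have hψ : EqOn (iteratedDeriv n f) (fun s => partialFst^[n] G (s, s)) V :=
      fun s hs => (hf n hn (by omega) s hs).symm
    rw [iterate_partialSnd_succ_diag hU hG (by omega) (hVU t ht)
      (hψ.eventuallyEq_of_mem (hV.mem_nhds ht)), ← iteratedDeriv_succ,
      Function.iterate_zero_apply, hf (n + 1) (by omega) (by omega) t ht, sub_self]
  | succ m ih =>
    have hψ : EqOn (fun _ => 0) (fun s => partialSnd^[m + 1] (partialFst^[n] G) (s, s)) V :=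
      fun s hs => (ih n hn (by omega) hs).symm
    rw [iterate_partialSnd_succ_diag hU hG (by omega) (hVU t ht)
      (hψ.eventuallyEq_of_mem (hV.mem_nhds ht)), ih (n + 1) (by omega) (by omega) ht,
      deriv_const', sub_zero]

theorem diag_iterate_partialSnd_eq_neg (hU : IsOpen U) (hV : IsOpen V)
    (hVU : ∀ t ∈ V, (t, t) ∈ U) (hG : ContDiffOn ℝ k G U) (hdiag : ∀ t ∈ V, G (t, t) = 0)
    (hf : ∀ n, 1 ≤ n → n ≤ k → ∀ t ∈ V, partialFst^[n] G (t, t) = iteratedDeriv n f t)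
    {m : ℕ} (hm : 1 ≤ m) (hmk : m ≤ k) {t : ℝ} (ht : t ∈ V) :
    partialSnd^[m] G (t, t) = -partialFst^[m] G (t, t) := by
  have key : ∀ j, j + 1 ≤ k → ∀ u ∈ V,
      partialSnd^[j + 1] G (u, u) = -iteratedDeriv (j + 1) f u := by
    intro j
    induction j with
    | zero =>
      intro hk u hu
      have hψ : EqOn (fun _ => 0) (fun s => G (s, s)) V := fun s hs => (hdiag s hs).symm
      refine (iterate_partialSnd_succ_diag (m := 0) (n := 0) hU hG (by omega) (hVU u hu)
        (hψ.eventuallyEq_of_mem (hV.mem_nhds hu))).trans ?_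
      rw [deriv_const', Function.iterate_zero_apply, hf 1 le_rfl hk u hu, zero_sub]
    | succ j ih =>
      intro hk u hu
      have hψ : EqOn (fun s => -iteratedDeriv (j + 1) f s)
          (fun s => partialSnd^[j + 1] G (s, s)) V :=
        fun s hs => (ih (by omega) s hs).symm
      refine (iterate_partialSnd_succ_diag (n := 0) hU hG (by omega) (hVU u hu)
        (hψ.eventuallyEq_of_mem (hV.mem_nhds hu))).trans ?_
      rw [diag_iterate_partialSnd_partialFst_eq_zero hU hV hVU hG hf j 1 le_rfl (by omega) hu,
        deriv.fun_neg, ← iteratedDeriv_succ, sub_zero]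
  obtain ⟨m, rfl⟩ : ∃ m', m = m' + 1 := ⟨m - 1, by omega⟩
  rw [key m hmk t ht, hf (m + 1) hm hmk t ht]

end

theorem higher_order_derivative_antisymmetry_general
    (k : ℕ) (f : ℝ → ℝ) (g : ℝ → ℝ → ℝ)
    (hg : ContDiffOn ℝ k (fun p : ℝ × ℝ => g p.1 p.2) (Icc (-1) 1 ×ˢ Icc (-1) 1))
    (hdiag : ∀ t ∈ Icc (-1 : ℝ) 1, g t t = 0)
    (hder : ∀ t ∈ Icc (-1 : ℝ) 1, ∀ j : ℕ, 1 ≤ j → j ≤ k →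
      iteratedDerivWithin j f (Icc (-1) 1) t
        = iteratedDerivWithin j (fun s => g s t) (Icc (-1) 1) t) :
    ∀ u ∈ Ioo (-1 : ℝ) 1, ∀ j : ℕ, 1 ≤ j → j ≤ k →
      iteratedDerivWithin j (fun t => g u t) (Icc (-1) 1) u
        = - iteratedDerivWithin j (fun s => g s u) (Icc (-1) 1) u := by
  intro u hu j hj hjk
  set G : ℝ × ℝ → ℝ := fun p => g p.1 p.2
  have hIcc : ∀ t ∈ Ioo (-1 : ℝ) 1, ∀ (φ : ℝ → ℝ) (n : ℕ),
      iteratedDerivWithin n φ (Icc (-1) 1) t = iteratedDeriv n φ t :=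
    fun t ht => iteratedDerivWithin_of_mem_nhds (Icc_mem_nhds ht.1 ht.2)
  have hfst : ∀ t ∈ Ioo (-1 : ℝ) 1, ∀ n : ℕ,
      iteratedDerivWithin n (fun s => g s t) (Icc (-1) 1) t = partialFst^[n] G (t, t) :=
    fun t ht n => (hIcc t ht _ n).trans (congrFun (iteratedDeriv_slice_fst G t n) t)
  rw [hfst u hu, hIcc u hu, iteratedDeriv_slice_snd G u j]
  refine diag_iterate_partialSnd_eq_neg (isOpen_Ioo.prod isOpen_Ioo) isOpen_Ioo
    (fun t ht => ⟨ht, ht⟩) (hg.mono (prod_mono Ioo_subset_Icc_self Ioo_subset_Icc_self))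
    (fun t ht => hdiag t (Ioo_subset_Icc_self ht)) (f := f) ?_ hj hjk hu
  intro n hn hnk t ht
  rw [← hfst t ht, ← hIcc t ht, hder t (Ioo_subset_Icc_self ht) n hn hnk]

/-- **Lemma (Taylor expansion / influence function identity).**
If `f : [-1,1] → ℝ` and `g : [-1,1]² → ℝ` are `k` times continuously differentiable,
`g(t,t) = 0` for all `t`, and for every `t ∈ [-1,1]` and `j = 1,…,k` the `j`-th derivative
of `f` at `t` equals the `j`-th partial derivative of `s ↦ g(s,t)` at `s = t`, then for
every `u ∈ (-1,1)` and `j = 1,…,k` the `j`-th partial derivative of `t ↦ g(u,t)` at `t = u`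
equals minus the `j`-th partial derivative of `s ↦ g(s,u)` at `s = u`. -/
theorem higher_order_derivative_antisymmetry
    (k : ℕ) (f : ℝ → ℝ) (g : ℝ → ℝ → ℝ)
    (hf : ContDiffOn ℝ k f (Icc (-1) 1))
    (hg : ContDiffOn ℝ k (fun p : ℝ × ℝ => g p.1 p.2) (Icc (-1) 1 ×ˢ Icc (-1) 1))
    (hdiag : ∀ t ∈ Icc (-1 : ℝ) 1, g t t = 0)
    (hder : ∀ t ∈ Icc (-1 : ℝ) 1, ∀ j : ℕ, 1 ≤ j → j ≤ k →
      iteratedDerivWithin j f (Icc (-1) 1) t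
        = iteratedDerivWithin j (fun s => g s t) (Icc (-1) 1) t) :
    ∀ u ∈ Ioo (-1 : ℝ) 1, ∀ j : ℕ, 1 ≤ j → j ≤ k →
      iteratedDerivWithin j (fun t => g u t) (Icc (-1) 1) u
        = - iteratedDerivWithin j (fun s => g s u) (Icc (-1) 1) u :=
  higher_order_derivative_antisymmetry_general k f g hg hdiag hder
end

section
/- Let μ be a σ-finite measure on a measurable space X, let L be a finite-dimensional subspace of L_2(μ) with basis e_1,…,e_k, and let v and w be measurable weight functions bounded away from 0 and ∞. Let Π_v and Π_w be the kernels of the weighted projections in L_2(μ) onto L with weights v and w respectively, given by Π_v(x,y) = Σ_{i,j} (C_v^{-1})_{ij} e_i(x) e_j(y) with (C_v)_{ij} = ∫ e_i e_j v dμ, and analogously for Π_w. Then for every x, Π_v(x,x) ≤ ‖w/v‖_∞ · Π_w(x,x), where ‖w/v‖_∞ = sup_x (w/v)(x). -/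
/-!
Write `a = (e i x)ᵢ`, so that `Π_u(x, x) = aᵀ C_u⁻¹ a`. Linear independence of the `e i` and
positivity of the weight make each Gram matrix `C_u` positive definite, and `w ≤ B v` pointwise
gives `cᵀ C_w c ≤ B cᵀ C_v c` for all `c`. Matrix inversion reverses this Loewner order,
so `aᵀ C_v⁻¹ a ≤ B aᵀ C_w⁻¹ a`.
-/

open MeasureTheory Matrix
open scoped ENNReal

namespace Matrix

variable {n : Type*} [Fintype n]

theorem sum_sum_mul_mul_eq_dotProduct_mulVec (M : Matrix n n ℝ) (a : n → ℝ) :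
    ∑ i, ∑ j, M i j * a i * a j = a ⬝ᵥ (M *ᵥ a) := by
  simp only [dotProduct, mulVec, Finset.mul_sum]
  exact Finset.sum_congr rfl fun i _ => Finset.sum_congr rfl fun j _ => by ring

variable [DecidableEq n]

/-- With `q = A⁻¹ a` and `p = C⁻¹ a`, expand `0 ≤ (q - B p)ᵀ C (q - B p)` and bound
`qᵀ C q ≤ B qᵀ A q = B aᵀ q`. -/
theorem dotProduct_inv_mulVec_le_mul_of_forall_le {A C : Matrix n n ℝ} {B : ℝ} (hB : 0 < B)
    (hA : IsUnit A.det) (hC : C.PosDef) (hCA : ∀ c, c ⬝ᵥ (C *ᵥ c) ≤ B * c ⬝ᵥ (A *ᵥ c))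
    (a : n → ℝ) :
    a ⬝ᵥ (A⁻¹ *ᵥ a) ≤ B * a ⬝ᵥ (C⁻¹ *ᵥ a) := by
  set q := A⁻¹ *ᵥ a
  set p := C⁻¹ *ᵥ a
  have hAq : A *ᵥ q = a := by rw [mulVec_mulVec, mul_nonsing_inv _ hA, one_mulVec]
  have hCp : C *ᵥ p = a := by
    rw [mulVec_mulVec, mul_nonsing_inv _ (isUnit_iff_ne_zero.mpr hC.det_pos.ne'), one_mulVec]
  have hpCq : p ⬝ᵥ (C *ᵥ q) = a ⬝ᵥ q := by
    have hCt : Cᵀ = C := by simpa using hC.isHermitian.eq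
    rw [dotProduct_mulVec, ← hCt, vecMul_transpose, hCp]
  have hexpand : (q - B • p) ⬝ᵥ (C *ᵥ (q - B • p))
      = q ⬝ᵥ (C *ᵥ q) - 2 * B * a ⬝ᵥ q + B ^ 2 * a ⬝ᵥ p := by
    simp only [mulVec_sub, mulVec_smul, sub_dotProduct, dotProduct_sub, smul_dotProduct,
      dotProduct_smul, hCp, hpCq, smul_eq_mul]
    rw [dotProduct_comm q a, dotProduct_comm p a]
    ring
  have hnonneg := hC.posSemidef.dotProduct_mulVec_nonneg (q - B • p)
  simp only [star_trivial] at hnonneg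
  have hqAq : q ⬝ᵥ (A *ᵥ q) = a ⬝ᵥ q := by rw [hAq, dotProduct_comm]
  have : B * a ⬝ᵥ q ≤ B * (B * a ⬝ᵥ p) := by nlinarith [hCA q]
  exact le_of_mul_le_mul_left this hB

end Matrix

section WeightedGram

variable {X ι : Type*} [MeasurableSpace X] {μ : Measure X} [Fintype ι] {e : ι → X → ℝ}
  {u u' : X → ℝ}

theorem memLp_top_of_nonneg_of_le (hum : Measurable u) (hnonneg : ∀ x, 0 ≤ u x) {C : ℝ}
    (hle : ∀ x, u x ≤ C) :
    MemLp u ∞ μ :=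
  memLp_top_of_bound hum.aestronglyMeasurable C <| ae_of_all _ fun x => by
    rw [Real.norm_of_nonneg (hnonneg x)]; exact hle x

noncomputable def weightedGram (μ : Measure X) (e : ι → X → ℝ) (u : X → ℝ) : Matrix ι ι ℝ :=
  Matrix.of fun i j => ∫ x, e i x * e j x * u x ∂μ

theorem integrable_sum_sq_mul (he : ∀ i, MemLp (e i) 2 μ) (hu : MemLp u ∞ μ) (c : ι → ℝ) :
    Integrable (fun x => (∑ i, c i * e i x) ^ 2 * u x) μ :=
  (memLp_finsetSum _ fun i _ => (he i).const_mul (c i)).integrable_sq.mul_of_top_left hu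

theorem dotProduct_weightedGram_mulVec (he : ∀ i, MemLp (e i) 2 μ) (hu : MemLp u ∞ μ)
    (c : ι → ℝ) :
    c ⬝ᵥ (weightedGram μ e u *ᵥ c) = ∫ x, (∑ i, c i * e i x) ^ 2 * u x ∂μ := by
  have hint (i j : ι) : Integrable (fun x => c i * c j * (e i x * e j x * u x)) μ :=
    (((he i).integrable_mul (he j)).mul_of_top_left hu).const_mul _
  calc c ⬝ᵥ (weightedGram μ e u *ᵥ c)
      = ∑ i, ∑ j, ∫ x, c i * c j * (e i x * e j x * u x) ∂μ := by
        simp only [dotProduct, mulVec, weightedGram, of_apply, Finset.mul_sum,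
          integral_const_mul]
        exact Finset.sum_congr rfl fun i _ => Finset.sum_congr rfl fun j _ => by ring
    _ = ∫ x, ∑ i, ∑ j, c i * c j * (e i x * e j x * u x) ∂μ := by
        rw [integral_finsetSum _ fun i _ => integrable_finsetSum _ fun j _ => hint i j]
        exact Finset.sum_congr rfl fun i _ => (integral_finsetSum _ fun j _ => hint i j).symm
    _ = ∫ x, (∑ i, c i * e i x) ^ 2 * u x ∂μ := by
        congr 1 with x
        rw [sq, Finset.sum_mul_sum, Finset.sum_mul]
        exact Finset.sum_congr rfl fun i _ => by
          rw [Finset.sum_mul]; exact Finset.sum_congr rfl fun j _ => by ring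

theorem posDef_weightedGram (he : ∀ i, MemLp (e i) 2 μ)
    (hind : ∀ c : ι → ℝ, (∀ᵐ x ∂μ, ∑ i, c i * e i x = 0) → c = 0)
    (hu : MemLp u ∞ μ) (hu_pos : ∀ᵐ x ∂μ, 0 < u x) :
    (weightedGram μ e u).PosDef := by
  refine PosDef.of_dotProduct_mulVec_pos ?_ fun c hc => ?_
  · ext i j
    simp only [conjTranspose_apply, star_trivial, weightedGram, of_apply, mul_comm (e j _)]
  rw [star_trivial, dotProduct_weightedGram_mulVec he hu]
  have hnonneg : 0 ≤ᵐ[μ] fun x => (∑ i, c i * e i x) ^ 2 * u x := by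
    filter_upwards [hu_pos] with x hx using mul_nonneg (sq_nonneg _) hx.le
  refine (integral_nonneg_of_ae hnonneg).lt_of_ne fun h => hc (hind c ?_)
  filter_upwards [(integral_eq_zero_iff_of_nonneg_ae hnonneg
    (integrable_sum_sq_mul he hu c)).1 h.symm, hu_pos] with x hx hux
  simpa [hux.ne'] using hx

theorem dotProduct_weightedGram_mulVec_le_mul (he : ∀ i, MemLp (e i) 2 μ) (hu : MemLp u ∞ μ)
    (hu' : MemLp u' ∞ μ) {B : ℝ} (huu' : ∀ᵐ x ∂μ, u x ≤ B * u' x) (c : ι → ℝ) :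
    c ⬝ᵥ (weightedGram μ e u *ᵥ c) ≤ B * c ⬝ᵥ (weightedGram μ e u' *ᵥ c) := by
  rw [dotProduct_weightedGram_mulVec he hu, dotProduct_weightedGram_mulVec he hu',
    ← integral_const_mul]
  refine integral_mono_ae (integrable_sum_sq_mul he hu c)
    ((integrable_sum_sq_mul he hu' c).const_mul B) ?_
  filter_upwards [huu'] with x hx
  nlinarith [sq_nonneg (∑ i, c i * e i x)]

end WeightedGram

theorem weighted_projection_kernels_diagonal_comparison_general
    {X : Type*} [MeasurableSpace X] (μ : Measure X)
    (k : ℕ) (e : Fin k → X → ℝ)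
    (heL2 : ∀ i, MemLp (e i) 2 μ)
    (hind : ∀ c : Fin k → ℝ, (∀ᵐ x ∂μ, ∑ i, c i * e i x = 0) → c = 0)
    (v w : X → ℝ) (hvm : Measurable v) (hwm : Measurable w)
    (hv : ∃ c C : ℝ, 0 < c ∧ ∀ x, c ≤ v x ∧ v x ≤ C)
    (hw : ∃ c C : ℝ, 0 < c ∧ ∀ x, c ≤ w x ∧ w x ≤ C)
    (Cv Cw : Matrix (Fin k) (Fin k) ℝ)
    (hCv : ∀ i j, Cv i j = ∫ x, e i x * e j x * v x ∂μ)
    (hCw : ∀ i j, Cw i j = ∫ x, e i x * e j x * w x ∂μ)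
    (B : ℝ) (hB : ∀ x, w x / v x ≤ B) :
    Cv.det ≠ 0 ∧ Cw.det ≠ 0 ∧
      ∀ x, (∑ i, ∑ j, Cv⁻¹ i j * e i x * e j x)
        ≤ B * ∑ i, ∑ j, Cw⁻¹ i j * e i x * e j x := by
  obtain ⟨cv, Cv', hcv, hvb⟩ := hv
  obtain ⟨cw, Cw', hcw, hwb⟩ := hw
  have hv_pos x : 0 < v x := hcv.trans_le (hvb x).1
  have hw_pos x : 0 < w x := hcw.trans_le (hwb x).1
  have hv_top : MemLp v ∞ μ := memLp_top_of_nonneg_of_le hvm (hv_pos · |>.le) fun x => (hvb x).2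
  have hw_top : MemLp w ∞ μ := memLp_top_of_nonneg_of_le hwm (hw_pos · |>.le) fun x => (hwb x).2
  obtain rfl : Cv = weightedGram μ e v := Matrix.ext hCv
  obtain rfl : Cw = weightedGram μ e w := Matrix.ext hCw
  have hCv_pd := posDef_weightedGram heL2 hind hv_top (ae_of_all _ hv_pos)
  have hCw_pd := posDef_weightedGram heL2 hind hw_top (ae_of_all _ hw_pos)
  refine ⟨hCv_pd.det_pos.ne', hCw_pd.det_pos.ne', fun x => ?_⟩
  have hB_pos : 0 < B := (div_pos (hw_pos x) (hv_pos x)).trans_le (hB x)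
  have hwv : ∀ y, w y ≤ B * v y := fun y => (div_le_iff₀ (hv_pos y)).1 (hB y)
  simp only [sum_sum_mul_mul_eq_dotProduct_mulVec]
  exact dotProduct_inv_mulVec_le_mul_of_forall_le hB_pos hCv_pd.det_pos.ne'.isUnit hCw_pd
    (dotProduct_weightedGram_mulVec_le_mul heL2 hw_top hv_top (ae_of_all _ hwv)) _

/-- **Lemma (comparison of diagonals of weighted projection kernels).**
Let `L` be spanned by linearly independent `e 1, …, e k ∈ L₂(μ)` and let `v, w` be weights
bounded away from `0` and `∞`. Then the Gram matrices `Cv, Cw` are invertible and the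
kernels `Π_v(x,y) = Σᵢⱼ (Cv⁻¹)ᵢⱼ eᵢ(x) eⱼ(y)` and `Π_w` of the weighted projections onto
`L` satisfy `Π_v(x,x) ≤ ‖w/v‖_∞ · Π_w(x,x)` for every `x` (`B` being any bound on `w/v`). -/
theorem weighted_projection_kernels_diagonal_comparison
    {X : Type*} [MeasurableSpace X] (μ : Measure X) [SigmaFinite μ]
    (k : ℕ) (e : Fin k → X → ℝ)
    (hem : ∀ i, Measurable (e i)) (heL2 : ∀ i, MemLp (e i) 2 μ)
    (hind : ∀ c : Fin k → ℝ, (∀ᵐ x ∂μ, ∑ i, c i * e i x = 0) → c = 0)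
    (v w : X → ℝ) (hvm : Measurable v) (hwm : Measurable w)
    (hv : ∃ c C : ℝ, 0 < c ∧ ∀ x, c ≤ v x ∧ v x ≤ C)
    (hw : ∃ c C : ℝ, 0 < c ∧ ∀ x, c ≤ w x ∧ w x ≤ C)
    (Cv Cw : Matrix (Fin k) (Fin k) ℝ)
    (hCv : ∀ i j, Cv i j = ∫ x, e i x * e j x * v x ∂μ)
    (hCw : ∀ i j, Cw i j = ∫ x, e i x * e j x * w x ∂μ)
    (B : ℝ) (hB : ∀ x, w x / v x ≤ B) :
    Cv.det ≠ 0 ∧ Cw.det ≠ 0 ∧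
      ∀ x, (∑ i, ∑ j, Cv⁻¹ i j * e i x * e j x)
        ≤ B * ∑ i, ∑ j, Cw⁻¹ i j * e i x * e j x :=
  weighted_projection_kernels_diagonal_comparison_general μ k e heL2 hind v w hvm hwm hv hw Cv Cw
    hCv hCw B hB
end

section
/- Let μ be a σ-finite measure on a measurable space X, let r ≥ 2 and m ≥ 3 be given, and let Π_1,…,Π_{m−1}: X×X → ℝ be symmetric measurable kernels whose associated integral operators h ↦ ∫ Π_i(·,y) h(y) dμ(y) are bounded on L_s(μ) with operator norm at most C for every s ∈ [r/(r−1), r]. Then for arbitrary measurable functions w_1,…,w_m, | ∫⋯∫ ∏_{i=1}^{m−1} Π_i(x_i,x_{i+1}) ∏_{i=1}^m w_i(x_i) dμ(x_1)⋯dμ(x_m) | ≤ C^{m−3} ‖Π_1 w_1‖_r ‖Π_{m−1} w_m‖_r ∏_{i=2}^{m−1} ‖w_i‖_{(m−2)r/(r−2)}, where (m−2)r/(r−2) is interpreted as ∞ when r = 2. -/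
/-!
Integrate the variables out from the left. The first integration turns `w₀(x₀) K₀(x₀, x₁)` into
`(K₀ w₀)(x₁)`, by symmetry of `K₀`, so the chain is replaced by a shorter one whose first weight
is `g₁ = (K₀ w₀) w₁`; inductively `g_{i+1} = (K_i g_i) w_{i+1}`, and at the end
`g_{n-1}` is paired with `K_{n-1} w_n`. With `q = (n-1) r / (r-2)` and `1/t_i = 1/r + i/q`,
Hölder's inequality and the operator bound at exponent `t_i ∈ [r', r]` give
`‖g_{i+1}‖_{t_{i+1}} ≤ C ‖g_i‖_{t_i} ‖w_{i+1}‖_q` and `‖g₁‖_{t₁} ≤ ‖K₀ w₀‖_r ‖w₁‖_q`, while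
`1/t_{n-1} + 1/r = 1` makes the final pairing a Hölder pairing.
-/

open MeasureTheory ENNReal Filter Set Function

theorem Fin.prod_erase_zero_erase_last {M : Type*} [CommMonoid M] {n : ℕ}
    (g : Fin (n + 2) → M) :
    ∏ i ∈ (Finset.univ.erase 0).erase (Fin.last (n + 1)), g i =
      ∏ i : Fin n, g i.castSucc.succ := by
  symm
  refine Finset.prod_nbij (fun i => i.castSucc.succ) (fun i _ => ?_)
    (fun a _ b _ h => by simpa using h) (fun i hi => ?_) (fun _ _ => rfl)
  · simp only [Finset.mem_erase, ne_eq, Fin.ext_iff, Fin.val_succ, Fin.val_castSucc,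
      Fin.val_last, Fin.val_zero, Finset.mem_univ, and_true]
    omega
  · simp only [Finset.coe_erase, Finset.coe_univ, Set.mem_sdiff, Set.mem_univ,
      Set.mem_singleton_iff, true_and, Fin.ext_iff, Fin.val_last, Fin.val_zero] at hi
    refine ⟨⟨i - 1, by omega⟩, Finset.mem_coe.2 (Finset.mem_univ _), Fin.ext ?_⟩
    simp only [Fin.val_succ, Fin.val_castSucc]
    omega

theorem inv_add_inv_add_mul_inv_eq_one {r : ℝ} (hr : 2 ≤ r) {m : ℕ} (hm : m ≠ 0) :
    (ENNReal.ofReal r)⁻¹ + (ENNReal.ofReal r)⁻¹ +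
        m * (if r = 2 then ⊤ else ENNReal.ofReal (m * r / (r - 2)))⁻¹ = 1 := by
  split_ifs with h2
  · subst h2
    simp [ENNReal.inv_two_add_inv_two]
  have hr2 : 0 < r - 2 := by
    have := lt_of_le_of_ne hr (Ne.symm h2)
    linarith
  rw [← ENNReal.ofReal_inv_of_pos (by linarith), ← ENNReal.ofReal_inv_of_pos (by positivity),
    ← ENNReal.ofReal_natCast, ← ENNReal.ofReal_mul (by positivity),
    ← ENNReal.ofReal_add (by positivity) (by positivity),
    ← ENNReal.ofReal_add (by positivity) (by positivity), ← ENNReal.ofReal_one]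
  congr 1
  field_simp
  ring

section Holder

variable {X : Type*} [MeasurableSpace X] {μ : Measure X}

theorem eLpNorm_mul_le_of_inv_add_inv {f g : X → ℝ} (hf : AEStronglyMeasurable f μ)
    (hg : AEStronglyMeasurable g μ) {p q s : ℝ≥0∞} (hpqs : p⁻¹ + q⁻¹ = s⁻¹) :
    eLpNorm (f * g) s μ ≤ eLpNorm f p μ * eLpNorm g q μ := by
  have : ENNReal.HolderTriple p q s := ⟨hpqs⟩
  exact eLpNorm_smul_le_mul_eLpNorm (φ := f) hg hf

theorem ofReal_abs_integral_mul_le {f g : X → ℝ} (hf : AEStronglyMeasurable f μ)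
    (hg : AEStronglyMeasurable g μ) {p q : ℝ≥0∞} (hpq : p⁻¹ + q⁻¹ = 1) :
    ENNReal.ofReal |∫ x, f x * g x ∂μ| ≤ eLpNorm f p μ * eLpNorm g q μ := by
  rw [← Real.enorm_eq_ofReal_abs]
  calc ‖∫ x, f x * g x ∂μ‖ₑ ≤ eLpNorm (f * g) 1 μ := by
        rw [eLpNorm_one_eq_lintegral_enorm]
        exact enorm_integral_le_lintegral_enorm _
    _ ≤ eLpNorm f p μ * eLpNorm g q μ :=
        eLpNorm_mul_le_of_inv_add_inv hf hg (by rw [hpq, inv_one])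

end Holder

section KernelOperator

variable {X : Type*} [MeasurableSpace X] {μ : Measure X}

noncomputable def kernelOp (μ : Measure X) (K : X → X → ℝ) (h : X → ℝ) (x : X) : ℝ :=
  ∫ y, K x y * h y ∂μ

theorem measurable_kernelOp [SFinite μ] {K : X → X → ℝ} (hK : Measurable (uncurry K))
    {h : X → ℝ} (hh : Measurable h) : Measurable (kernelOp μ K h) :=
  (hK.mul (hh.comp measurable_snd)).stronglyMeasurable.integral_prod_right'.measurable

theorem kernelOp_ae_eq_zero [SigmaFinite μ] {p : ℝ≥0∞} {K : X → X → ℝ}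
    (hK : ∀ h, Measurable h → MemLp h p μ → kernelOp μ K h =ᵐ[μ] 0)
    {g : X → ℝ} (hg : Measurable g) :
    kernelOp μ K g =ᵐ[μ] 0 := by
  set E : ℕ → Set X := fun M => spanningSets μ M ∩ {y | |g y| ≤ M}
  have hE : ∀ M, MeasurableSet (E M) := fun M =>
    (measurableSet_spanningSets μ M).inter (measurableSet_le hg.abs measurable_const)
  have hE_mono : Monotone E := fun M N hMN =>
    inter_subset_inter (monotone_spanningSets μ hMN) fun y (hy : |g y| ≤ M) =>
      (hy.trans (by exact_mod_cast hMN) : |g y| ≤ N)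
  have hE_union : ⋃ M, E M = univ := by
    refine eq_univ_of_forall fun y => ?_
    obtain ⟨M₀, hM₀⟩ := mem_iUnion.1 ((iUnion_spanningSets μ).symm ▸ mem_univ y)
    obtain ⟨M₁, hM₁⟩ := exists_nat_ge |g y|
    exact mem_iUnion.2 ⟨max M₀ M₁, monotone_spanningSets μ (le_max_left _ _) hM₀,
      hM₁.trans (by exact_mod_cast le_max_right _ _)⟩
  -- the truncations of `g` are bounded and supported on sets of finite measure
  have htrunc : ∀ M, MemLp ((E M).indicator g) p μ := by
    intro M
    have : IsFiniteMeasure (μ.restrict (E M)) := isFiniteMeasure_restrict.2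
      ((measure_mono inter_subset_left).trans_lt (measure_spanningSets_lt_top μ M)).ne
    rw [memLp_indicator_iff_restrict (hE M)]
    exact MemLp.of_bound hg.aestronglyMeasurable M
      ((ae_restrict_iff' (hE M)).2 (ae_of_all _ fun y hy => hy.2))
  filter_upwards [ae_all_iff.2 fun M => hK _ (hg.indicator (hE M)) (htrunc M)] with x hx
  by_cases hint : Integrable (fun y => K x y * g y) μ
  · have hlim := tendsto_setIntegral_of_monotone hE hE_mono
      (by rw [hE_union]; exact hint.integrableOn)
    rw [hE_union, setIntegral_univ] at hlim
    refine tendsto_nhds_unique hlim (tendsto_const_nhds.congr fun M => ?_)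
    rw [← integral_indicator (hE M), ← hx M]
    simp only [kernelOp, indicator_mul_right]
  · exact integral_undef hint

/-- Outside `L^p` the bound is trivial unless `C = 0`, where `kernelOp_ae_eq_zero` applies. -/
theorem eLpNorm_kernelOp_le [SigmaFinite μ] {p C : ℝ≥0∞} {K : X → X → ℝ}
    (hK : Measurable (uncurry K))
    (hop : ∀ h, MemLp h p μ → eLpNorm (kernelOp μ K h) p μ ≤ C * eLpNorm h p μ)
    {h : X → ℝ} (hh : Measurable h) :
    eLpNorm (kernelOp μ K h) p μ ≤ C * eLpNorm h p μ := by
  by_cases hmem : MemLp h p μ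
  · exact hop h hmem
  have hinf : eLpNorm h p μ = ∞ := by
    contrapose! hmem
    exact ⟨hh.aestronglyMeasurable, hmem.lt_top⟩
  rcases eq_or_ne C 0 with rfl | hC
  · rcases eq_or_ne p 0 with rfl | hp
    · simp
    have hzero := kernelOp_ae_eq_zero (fun g hg hgp => (eLpNorm_eq_zero_iff
      (measurable_kernelOp hK hg).aestronglyMeasurable hp).1 (by simpa using hop g hgp)) hh
    simp [eLpNorm_congr_ae hzero]
  · simp [hinf, ENNReal.mul_top hC]

theorem eLpNorm_kernelOp_le_of_real [SigmaFinite μ] {r : ℝ} (hr : 1 < r) {C : ℝ≥0∞}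
    {K : X → X → ℝ} (hK : Measurable (uncurry K))
    (hop : ∀ s : ℝ, r / (r - 1) ≤ s → s ≤ r → ∀ h : X → ℝ, MemLp h (ENNReal.ofReal s) μ →
      eLpNorm (kernelOp μ K h) (ENNReal.ofReal s) μ ≤ C * eLpNorm h (ENNReal.ofReal s) μ)
    {p : ℝ≥0∞} (hrp : (ENNReal.ofReal r)⁻¹ ≤ p⁻¹) (hpr : p⁻¹ + (ENNReal.ofReal r)⁻¹ ≤ 1)
    {h : X → ℝ} (hh : Measurable h) :
    eLpNorm (kernelOp μ K h) p μ ≤ C * eLpNorm h p μ := by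
  have hr0 : 0 < r := by linarith
  have hp_top : p ≠ ∞ := by
    rintro rfl
    simp at hrp
  have hp_pos : 0 < p.toReal := by
    refine ENNReal.toReal_pos (fun hp => ?_) hp_top
    simp [hp] at hpr
  obtain ⟨s, hs, rfl⟩ : ∃ s, 0 < s ∧ p = ENNReal.ofReal s :=
    ⟨p.toReal, hp_pos, (ENNReal.ofReal_toReal hp_top).symm⟩
  rw [← ENNReal.ofReal_inv_of_pos hs, ← ENNReal.ofReal_inv_of_pos hr0] at hrp hpr
  rw [ENNReal.ofReal_le_ofReal_iff (by positivity), inv_le_inv₀ hr0 hs] at hrp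
  rw [← ENNReal.ofReal_add (by positivity) (by positivity), ENNReal.ofReal_le_one] at hpr
  refine eLpNorm_kernelOp_le hK (hop s ?_ hrp) hh
  rw [div_le_iff₀ (by linarith)]
  field_simp at hpr
  nlinarith

end KernelOperator

section KernelChain

variable {X : Type*}

def kernelChain {k : ℕ} (f : X → ℝ) (L : Fin k → X → X → ℝ) (v : Fin k → X → ℝ)
    (y : Fin (k + 1) → X) : ℝ :=
  f (y 0) * ∏ j, L j (y j.castSucc) (y j.succ) * v j (y j.succ)

theorem kernelChain_eq_prod_mul_prod {k : ℕ} (L : Fin k → X → X → ℝ)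
    (w : Fin (k + 1) → X → ℝ) (y : Fin (k + 1) → X) :
    kernelChain (w 0) L (Fin.tail w) y =
      (∏ j, L j (y j.castSucc) (y j.succ)) * ∏ i, w i (y i) := by
  simp only [kernelChain, Fin.tail, Finset.prod_mul_distrib,
    Fin.prod_univ_succ (fun i => w i (y i))]
  ring

theorem kernelChain_mul {k : ℕ} (g f : X → ℝ) (L : Fin k → X → X → ℝ) (v : Fin k → X → ℝ)
    (y : Fin (k + 1) → X) :
    kernelChain (g * f) L v y = g (y 0) * kernelChain f L v y := by
  simp only [kernelChain, Pi.mul_apply, mul_assoc]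

theorem kernelChain_cons {k : ℕ} (f : X → ℝ) (L : Fin (k + 1) → X → X → ℝ)
    (v : Fin (k + 1) → X → ℝ) (x : X) (ys : Fin (k + 1) → X) :
    kernelChain f L v (Fin.cons x ys) =
      f x * L 0 x (ys 0) * kernelChain (v 0) (Fin.tail L) (Fin.tail v) ys := by
  simp only [kernelChain, Fin.prod_univ_succ, Fin.cons_zero, Fin.cons_succ, Fin.castSucc_zero,
    ← Fin.succ_castSucc, Fin.tail]
  ring

variable [MeasurableSpace X] {μ : Measure X}

theorem integral_cons_kernelChain {k : ℕ} (f : X → ℝ) {L : Fin (k + 1) → X → X → ℝ}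
    (hL : ∀ x y, L 0 x y = L 0 y x) (v : Fin (k + 1) → X → ℝ) (ys : Fin (k + 1) → X) :
    ∫ x, kernelChain f L v (Fin.cons x ys) ∂μ =
      kernelChain (kernelOp μ (L 0) f * v 0) (Fin.tail L) (Fin.tail v) ys := by
  simp_rw [kernelChain_cons, integral_mul_const, kernelChain_mul, kernelOp, hL _ (ys 0),
    mul_comm (f _)]

theorem piFinSuccAbove_zero_symm_eq {n : ℕ} :
    ⇑(MeasurableEquiv.piFinSuccAbove (fun _ : Fin (n + 1) => X) 0).symm =
      fun p => Fin.cons p.1 p.2 := by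
  ext p
  simp [MeasurableEquiv.piFinSuccAbove_symm_apply, Fin.insertNthEquiv]

variable [SigmaFinite μ]

theorem integrable_comp_finCons {n : ℕ} {F : (Fin (n + 1) → X) → ℝ}
    (hF : Integrable F (Measure.pi fun _ => μ)) :
    Integrable (fun p : X × (Fin n → X) => F (Fin.cons p.1 p.2))
      (μ.prod (Measure.pi fun _ => μ)) := by
  have e := (measurePreserving_piFinSuccAbove (fun _ : Fin (n + 1) => μ) 0).symm
  rw [piFinSuccAbove_zero_symm_eq] at e
  exact (e.integrable_comp hF.aestronglyMeasurable).2 hF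

theorem integral_comp_finCons {n : ℕ} (F : (Fin (n + 1) → X) → ℝ) :
    ∫ p : X × (Fin n → X), F (Fin.cons p.1 p.2) ∂(μ.prod (Measure.pi fun _ => μ)) =
      ∫ y, F y ∂(Measure.pi fun _ => μ) := by
  have e := (measurePreserving_piFinSuccAbove (fun _ : Fin (n + 1) => μ) 0).symm
  rw [← e.integral_comp', piFinSuccAbove_zero_symm_eq]

variable {k : ℕ} {f : X → ℝ}

theorem integrable_kernelChain_succ {L : Fin (k + 1) → X → X → ℝ} {v : Fin (k + 1) → X → ℝ}
    (hint : Integrable (kernelChain f L v) (Measure.pi fun _ => μ))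
    (hL : ∀ x y, L 0 x y = L 0 y x) :
    Integrable (kernelChain (kernelOp μ (L 0) f * v 0) (Fin.tail L) (Fin.tail v))
      (Measure.pi fun _ => μ) := by
  simpa only [integral_cons_kernelChain f hL] using
    (integrable_comp_finCons hint).integral_prod_right

theorem integral_kernelChain_succ {L : Fin (k + 1) → X → X → ℝ} {v : Fin (k + 1) → X → ℝ}
    (hint : Integrable (kernelChain f L v) (Measure.pi fun _ => μ))
    (hL : ∀ x y, L 0 x y = L 0 y x) :
    ∫ y, kernelChain f L v y ∂(Measure.pi fun _ => μ) =
      ∫ y, kernelChain (kernelOp μ (L 0) f * v 0) (Fin.tail L) (Fin.tail v) y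
        ∂(Measure.pi fun _ => μ) := by
  rw [← integral_comp_finCons, integral_prod_symm _ (integrable_comp_finCons hint)]
  simp only [integral_cons_kernelChain f hL]

theorem integral_kernelChain_one {L : Fin 1 → X → X → ℝ} {v : Fin 1 → X → ℝ}
    (hint : Integrable (kernelChain f L v) (Measure.pi fun _ => μ)) :
    ∫ y, kernelChain f L v y ∂(Measure.pi fun _ => μ) =
      ∫ x, f x * kernelOp μ (L 0) (v 0) x ∂μ := by
  have e := (measurePreserving_finTwoArrow μ).symm
  have hchain : ∀ p : X × X, kernelChain f L v (MeasurableEquiv.finTwoArrow.symm p) =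
      f p.1 * (L 0 p.1 p.2 * v 0 p.2) := by
    intro p
    simp [kernelChain, MeasurableEquiv.finTwoArrow_symm_apply]
  rw [← e.integral_comp', funext hchain, integral_prod]
  · simp only [kernelOp, integral_const_mul]
  · have := (e.integrable_comp hint.aestronglyMeasurable).2 hint
    rwa [Function.comp_def, funext hchain] at this

/-- The conditions `ρ⁻¹ ≤ p⁻¹` and `p⁻¹ + ρ⁻¹ ≤ 1` say that `p` lies between `ρ` and its
conjugate exponent. -/
theorem ofReal_abs_integral_kernelChain_le {ρ q C : ℝ≥0∞} {L : Fin (k + 1) → X → X → ℝ}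
    (hL : ∀ j, Measurable (uncurry (L j))) (hL_symm : ∀ j x y, L j x y = L j y x)
    (hL_op : ∀ j, ∀ p : ℝ≥0∞, ρ⁻¹ ≤ p⁻¹ → p⁻¹ + ρ⁻¹ ≤ 1 → ∀ h : X → ℝ, Measurable h →
      eLpNorm (kernelOp μ (L j) h) p μ ≤ C * eLpNorm h p μ)
    (hf : Measurable f) {v : Fin (k + 1) → X → ℝ} (hv : ∀ j, Measurable (v j))
    {t : ℝ≥0∞} (hρt : ρ⁻¹ ≤ t⁻¹) (ht : t⁻¹ + k * q⁻¹ + ρ⁻¹ = 1)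
    (hint : Integrable (kernelChain f L v) (Measure.pi fun _ => μ)) :
    ENNReal.ofReal |∫ y, kernelChain f L v y ∂(Measure.pi fun _ => μ)| ≤
      C ^ k * eLpNorm f t μ * eLpNorm (kernelOp μ (L (Fin.last k)) (v (Fin.last k))) ρ μ *
        ∏ j : Fin k, eLpNorm (v j.castSucc) q μ := by
  induction k generalizing f t with
  | zero =>
    rw [integral_kernelChain_one hint]
    simpa using ofReal_abs_integral_mul_le hf.aestronglyMeasurable
      (measurable_kernelOp (hL 0) (hv 0)).aestronglyMeasurable (by simpa using ht)
  | succ k ih =>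
    set t' := (t⁻¹ + q⁻¹)⁻¹
    have ht' : t'⁻¹ = t⁻¹ + q⁻¹ := inv_inv _
    have hTf := measurable_kernelOp (μ := μ) (hL 0) hf
    have hop_t : eLpNorm (kernelOp μ (L 0) f) t μ ≤ C * eLpNorm f t μ := by
      refine hL_op 0 t hρt ?_ f hf
      rw [← ht]
      gcongr
      exact le_self_add
    rw [integral_kernelChain_succ hint (hL_symm 0)]
    calc _ ≤ C ^ k * eLpNorm (kernelOp μ (L 0) f * v 0) t' μ *
          eLpNorm (kernelOp μ (L (Fin.last (k + 1))) (v (Fin.last (k + 1)))) ρ μ *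
            ∏ j : Fin k, eLpNorm (v j.castSucc.succ) q μ :=
          ih (fun j => hL j.succ) (fun j => hL_symm j.succ) (fun j => hL_op j.succ)
            (hTf.mul (hv 0)) (fun j => hv j.succ) (hρt.trans (ht' ▸ le_self_add))
            (by rw [ht', ← ht]; push_cast; ring) (integrable_kernelChain_succ hint (hL_symm 0))
      _ ≤ C ^ k * (C * eLpNorm f t μ * eLpNorm (v 0) q μ) *
          eLpNorm (kernelOp μ (L (Fin.last (k + 1))) (v (Fin.last (k + 1)))) ρ μ *
            ∏ j : Fin k, eLpNorm (v j.castSucc.succ) q μ := by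
        gcongr
        exact (eLpNorm_mul_le_of_inv_add_inv hTf.aestronglyMeasurable
          (hv 0).aestronglyMeasurable ht'.symm).trans (by gcongr)
      _ = _ := by
        rw [Fin.prod_univ_succ, pow_succ]
        simp only [Fin.castSucc_zero, Fin.succ_castSucc]
        ring

theorem ofReal_abs_integral_kernelChain_tail_le {ρ q C : ℝ≥0∞} {K : Fin (k + 2) → X → X → ℝ}
    (hK : ∀ j, Measurable (uncurry (K j))) (hK_symm : ∀ j x y, K j x y = K j y x)
    (hK_op : ∀ j, ∀ p : ℝ≥0∞, ρ⁻¹ ≤ p⁻¹ → p⁻¹ + ρ⁻¹ ≤ 1 → ∀ h : X → ℝ, Measurable h →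
      eLpNorm (kernelOp μ (K j) h) p μ ≤ C * eLpNorm h p μ)
    {w : Fin (k + 3) → X → ℝ} (hw : ∀ i, Measurable (w i))
    (hρq : ρ⁻¹ + ρ⁻¹ + (k + 1 : ℕ) * q⁻¹ = 1) :
    ENNReal.ofReal |∫ y, kernelChain (w 0) K (Fin.tail w) y ∂(Measure.pi fun _ => μ)| ≤
      C ^ k * eLpNorm (kernelOp μ (K 0) (w 0)) ρ μ *
        eLpNorm (kernelOp μ (K (Fin.last (k + 1))) (w (Fin.last (k + 2)))) ρ μ *
          ∏ j : Fin (k + 1), eLpNorm (w j.castSucc.succ) q μ := by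
  by_cases hint : Integrable (kernelChain (w 0) K (Fin.tail w)) (Measure.pi fun _ => μ)
  swap
  · simp [integral_undef hint]
  rw [integral_kernelChain_succ hint (hK_symm 0), Fin.prod_univ_succ]
  have hKw := measurable_kernelOp (μ := μ) (hK 0) (hw 0)
  calc _ ≤ C ^ k * eLpNorm (kernelOp μ (K 0) (w 0) * w 1) (ρ⁻¹ + q⁻¹)⁻¹ μ *
        eLpNorm (kernelOp μ (K (Fin.last (k + 1))) (w (Fin.last (k + 2)))) ρ μ *
          ∏ j : Fin k, eLpNorm (w j.castSucc.succ.succ) q μ :=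
        ofReal_abs_integral_kernelChain_le (fun j => hK j.succ) (fun j => hK_symm j.succ)
          (fun j => hK_op j.succ) (hKw.mul (hw 1)) (fun j => hw j.succ.succ)
          (by rw [inv_inv]; exact le_self_add) (by rw [inv_inv, ← hρq]; push_cast; ring)
          (integrable_kernelChain_succ hint (hK_symm 0))
    _ ≤ C ^ k * (eLpNorm (kernelOp μ (K 0) (w 0)) ρ μ * eLpNorm (w 1) q μ) *
        eLpNorm (kernelOp μ (K (Fin.last (k + 1))) (w (Fin.last (k + 2)))) ρ μ *
          ∏ j : Fin k, eLpNorm (w j.castSucc.succ.succ) q μ := by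
      gcongr
      exact eLpNorm_mul_le_of_inv_add_inv hKw.aestronglyMeasurable (hw 1).aestronglyMeasurable
        (inv_inv _).symm
    _ = _ := by
      simp only [Fin.castSucc_zero, Fin.succ_zero_eq_one, Fin.succ_castSucc]
      ring

end KernelChain

/-- **Lemma (mean of a product of kernels).**
Let `K 0, …, K (n-1)` (with `n = m - 1 ≥ 2`, i.e. `m ≥ 3`) be symmetric measurable kernels
whose integral operators are bounded on `L_s(μ)` with norm at most `C` for every
`s ∈ [r/(r-1), r]`, where `r ≥ 2`. Then for arbitrary measurable `w 0, …, w n`,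
`|∫⋯∫ ∏ᵢ K i (xᵢ,xᵢ₊₁) ∏ᵢ w i (xᵢ) dμ^{n+1}| ≤
  C^{m-3} ‖K 0 (w 0)‖_r ‖K (n-1) (w n)‖_r ∏_{0<i<n} ‖w i‖_{(m-2)r/(r-2)}`,
with `(m-2)r/(r-2) = ∞` when `r = 2`. -/
theorem mean_product_of_kernels_bound
    {X : Type*} [MeasurableSpace X] (μ : Measure X) [SigmaFinite μ]
    (r : ℝ) (hr : 2 ≤ r) (n : ℕ) (hn : 2 ≤ n)
    (K : Fin n → X → X → ℝ)
    (hKm : ∀ i, Measurable (Function.uncurry (K i)))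
    (hsym : ∀ i x y, K i x y = K i y x)
    (C : ℝ≥0∞)
    (hop : ∀ i, ∀ s : ℝ, r / (r - 1) ≤ s → s ≤ r →
      ∀ h : X → ℝ, MemLp h (ENNReal.ofReal s) μ →
        eLpNorm (fun x => ∫ y, K i x y * h y ∂μ) (ENNReal.ofReal s) μ
          ≤ C * eLpNorm h (ENNReal.ofReal s) μ)
    (w : Fin (n + 1) → X → ℝ) (hwm : ∀ i, Measurable (w i)) :
    ENNReal.ofReal
        |∫ x : Fin (n + 1) → X,
            (∏ i : Fin n, K i (x i.castSucc) (x i.succ)) * ∏ i, w i (x i)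
            ∂(Measure.pi fun _ => μ)|
      ≤ C ^ (n - 2) *
          eLpNorm (fun x => ∫ y, K ⟨0, by omega⟩ x y * w 0 y ∂μ) (ENNReal.ofReal r) μ *
          eLpNorm (fun x => ∫ y, K ⟨n - 1, by omega⟩ x y * w (Fin.last n) y ∂μ)
            (ENNReal.ofReal r) μ *
          ∏ i ∈ (Finset.univ.erase 0).erase (Fin.last n),
            eLpNorm (w i)
              (if r = 2 then ⊤ else ENNReal.ofReal (((n : ℝ) - 1) * r / (r - 2))) μ := by
  obtain ⟨k, rfl⟩ : ∃ k, n = k + 2 := ⟨n - 2, by omega⟩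
  have hm : ((k + 2 : ℕ) : ℝ) - 1 = (k + 1 : ℕ) := by push_cast; ring
  simp only [Nat.add_sub_cancel, hm, Fin.zero_eta, ← kernelOp.eq_1,
    show (⟨k + 2 - 1, by omega⟩ : Fin (k + 2)) = Fin.last (k + 1) from rfl]
  simp_rw [← kernelChain_eq_prod_mul_prod, Fin.prod_erase_zero_erase_last]
  exact ofReal_abs_integral_kernelChain_tail_le hKm hsym
    (fun j _ hρp hpρ _ hh => eLpNorm_kernelOp_le_of_real (by linarith) (hKm j) (hop j) hρp hpρ hh)
    hwm (inv_add_inv_add_mul_inv_eq_one hr (by omega))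
end

section
/- Let μ be a σ-finite measure, w a measurable weight function bounded away from 0 and ∞, and let Π_w and Π denote the weighted projections in L_2(μ) onto a fixed closed subspace L relative to the weight functions w and 1 respectively; let M_w denote multiplication by w. Then for any conjugate exponents r^{-1} + s^{-1} = 1 and p^{-1} + q^{-1} = 1 and any g ∈ L_2(μ), ‖(Π_w − Π M_w) g‖_r ≤ ‖Π‖_s · ‖Π_w g‖_{rq} · ‖w − 1‖_{rp}, provided Π is bounded as an operator on L_s(μ) with norm ‖Π‖_s. -/
/-!
Put `f = Π_w g − Π M_w g ∈ L` and `u = (1 − w) Π_w g`. The two orthogonality relations give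
`⟨f, l⟩ = ⟨u, l⟩` for every `l ∈ L`, and since `f ∈ L` also `⟨f, φ⟩ = ⟨f, Π φ⟩ = ⟨u, Π φ⟩`
for every `φ ∈ L₂`. By Hölder the last pairing is at most `‖Π‖_s ‖u‖_r ‖φ‖_s`, so duality
between `L_r` and `L_s` gives `‖f‖_r ≤ ‖Π‖_s ‖u‖_r`, and a second Hölder inequality with
`1/r = 1/(rq) + 1/(rp)` splits `‖u‖_r`. The duality is tested only against the functions
`f |f|^(r-2)` truncated to sets of finite measure on which `f` is bounded: these lie in every
`L_t`, in particular in `L₂`, where `Π` is defined.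
-/

open MeasureTheory ENNReal

lemma abs_mul_abs_rpow_sub_two {r : ℝ} (hr : r ≠ 1) (x : ℝ) :
    |x * |x| ^ (r - 2)| = |x| ^ (r - 1) := by
  rw [abs_mul, abs_of_nonneg (Real.rpow_nonneg (abs_nonneg x) _),
    ← Real.rpow_one_add' (abs_nonneg x) (by contrapose! hr; linarith)]
  ring_nf

lemma mul_mul_abs_rpow_sub_two {r : ℝ} (hr₀ : r ≠ 0) (hr₁ : r ≠ 1) (x : ℝ) :
    x * (x * |x| ^ (r - 2)) = |x| ^ r := by
  have h₁ := Real.rpow_one_add' (abs_nonneg x) (show 1 + (r - 2) ≠ 0 by contrapose! hr₁; linarith)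
  have h₂ := Real.rpow_one_add' (abs_nonneg x) (show 1 + (r - 1) ≠ 0 by contrapose! hr₀; linarith)
  calc x * (x * |x| ^ (r - 2)) = |x| * (|x| * |x| ^ (r - 2)) := by
        rw [← mul_assoc, ← abs_mul_abs_self, mul_assoc]
    _ = |x| ^ r := by
        rw [← h₁, show 1 + (r - 2) = r - 1 by ring, ← h₂, show 1 + (r - 1) = r by ring]

lemma enorm_mul_abs_rpow_sub_two_rpow {r s : ℝ} (hrs : r.HolderConjugate s) (x : ℝ) :
    ‖x * |x| ^ (r - 2)‖ₑ ^ s = ‖x‖ₑ ^ r := by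
  rw [Real.enorm_eq_ofReal_abs, abs_mul_abs_rpow_sub_two (sub_ne_zero.1 hrs.sub_one_ne_zero),
    ofReal_rpow_of_nonneg (by positivity) hrs.symm.nonneg, ← Real.rpow_mul (abs_nonneg x),
    hrs.sub_one_mul_conj, ← ofReal_rpow_of_nonneg (abs_nonneg x) hrs.nonneg,
    Real.enorm_eq_ofReal_abs]

lemma ENNReal.le_rpow_of_le_mul_rpow {a b : ℝ≥0∞} {r s : ℝ} (hr : 0 < r) (hrs : r⁻¹ + s⁻¹ = 1)
    (ha : a ≠ ∞) (h : a ≤ b * a ^ s⁻¹) : a ≤ b ^ r := by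
  rcases eq_or_ne a 0 with rfl | ha₀
  · exact zero_le
  rw [← ENNReal.rpow_inv_le_iff hr]
  refine (ENNReal.mul_le_mul_iff_left (c := a ^ s⁻¹)
    (ENNReal.rpow_pos (pos_iff_ne_zero.2 ha₀) ha).ne' (ENNReal.rpow_ne_top_of_ne_zero ha₀ ha)).1 ?_
  rwa [← ENNReal.rpow_add _ _ ha₀ ha, hrs, ENNReal.rpow_one]

lemma Real.HolderConjugate.holderTriple_mul_left {p q : ℝ} (h : p.HolderConjugate q) {r : ℝ}
    (hr : 0 < r) : (r * p).HolderTriple (r * q) r where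
  inv_add_inv_eq_inv := by rw [mul_inv, mul_inv, ← mul_add, h.inv_add_inv_eq_one, mul_one]
  left_pos := mul_pos hr h.pos
  right_pos := mul_pos hr h.symm.pos

section Duality

variable {X : Type*} [MeasurableSpace X] {μ : Measure X} {f : X → ℝ} {r s : ℝ} {B : ℝ≥0∞}

lemma setLIntegral_enorm_rpow_le_of_forall_integral_mul_le (hf : Measurable f)
    (hrs : r.HolderConjugate s)
    (hB : ∀ φ : X → ℝ, (∀ t, MemLp φ t μ) →
      ENNReal.ofReal (∫ x, f x * φ x ∂μ) ≤ B * eLpNorm φ (.ofReal s) μ)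
    {E : Set X} (hE : MeasurableSet E) (hμE : μ E ≠ ∞) {M : ℝ} (hfM : ∀ x ∈ E, |f x| ≤ M) :
    ∫⁻ x in E, ‖f x‖ₑ ^ r ∂μ ≤ B ^ r := by
  have hr₀ := hrs.ne_zero
  have hr₁ := sub_ne_zero.1 hrs.sub_one_ne_zero
  set φ := E.indicator fun x => f x * |f x| ^ (r - 2)
  have hφ_memLp : ∀ t, MemLp φ t μ := by
    intro t
    have : IsFiniteMeasure (μ.restrict E) := isFiniteMeasure_restrict.2 hμE
    rw [memLp_indicator_iff_restrict hE]
    refine .of_bound (by fun_prop) (M ^ (r - 1)) (ae_restrict_of_forall_mem hE fun x hx => ?_)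
    rw [Real.norm_eq_abs, abs_mul_abs_rpow_sub_two hr₁]
    exact Real.rpow_le_rpow (abs_nonneg _) (hfM x hx) hrs.sub_one_pos.le
  have hpair : ∫ x, f x * φ x ∂μ = (∫⁻ x in E, ‖f x‖ₑ ^ r ∂μ).toReal := by
    have hfφ : (fun x => f x * φ x) = E.indicator fun x => |f x| ^ r := by
      ext x
      by_cases hx : x ∈ E <;> simp [φ, hx, mul_mul_abs_rpow_sub_two hr₀ hr₁]
    rw [hfφ, integral_indicator hE, integral_eq_lintegral_of_nonneg_ae
      (ae_of_all _ fun x => by positivity) (hf.abs.pow_const r).aestronglyMeasurable]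
    refine congrArg _ (setLIntegral_congr_fun hE fun x _ => ?_)
    rw [← ofReal_rpow_of_nonneg (abs_nonneg _) hrs.nonneg, Real.enorm_eq_ofReal_abs]
  have hnorm : eLpNorm φ (.ofReal s) μ = (∫⁻ x in E, ‖f x‖ₑ ^ r ∂μ) ^ s⁻¹ := by
    have hφs : (fun x => ‖φ x‖ₑ ^ s) = E.indicator fun x => ‖f x‖ₑ ^ r := by
      ext x
      by_cases hx : x ∈ E
      · simp only [φ, Set.indicator_of_mem hx, enorm_mul_abs_rpow_sub_two_rpow hrs]
      · simp [φ, hx, zero_rpow_of_pos hrs.symm.pos]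
    rw [eLpNorm_eq_lintegral_rpow_enorm_toReal (by simpa using hrs.symm.pos) ofReal_ne_top,
      toReal_ofReal hrs.symm.nonneg, hφs, lintegral_indicator hE, one_div]
  have hfin : ∫⁻ x in E, ‖f x‖ₑ ^ r ∂μ ≠ ∞ := by
    refine ne_top_of_le_ne_top ?_ (setLIntegral_mono (g := fun _ => ENNReal.ofReal M ^ r)
      measurable_const fun x hx => ?_)
    · rw [setLIntegral_const]
      exact mul_ne_top (rpow_ne_top_of_nonneg hrs.nonneg ofReal_ne_top) hμE
    · rw [Real.enorm_eq_ofReal_abs]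
      exact rpow_le_rpow (ofReal_le_ofReal (hfM x hx)) hrs.nonneg
  refine ENNReal.le_rpow_of_le_mul_rpow hrs.pos hrs.inv_add_inv_eq_one hfin ?_
  simpa [hpair, hnorm, ofReal_toReal hfin] using hB φ hφ_memLp

lemma lintegral_enorm_rpow_le_of_forall_integral_mul_le [SigmaFinite μ] (hf : Measurable f)
    (hrs : r.HolderConjugate s)
    (hB : ∀ φ : X → ℝ, (∀ t, MemLp φ t μ) →
      ENNReal.ofReal (∫ x, f x * φ x ∂μ) ≤ B * eLpNorm φ (.ofReal s) μ) :
    ∫⁻ x, ‖f x‖ₑ ^ r ∂μ ≤ B ^ r := by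
  set E : ℕ → Set X := fun n => spanningSets μ n ∩ {x | |f x| ≤ n}
  have hE_mono : Monotone E := fun m n hmn =>
    Set.inter_subset_inter (monotone_spanningSets μ hmn)
      fun x (hx : |f x| ≤ m) => hx.trans (Nat.cast_le.2 hmn)
  have hE_cover : ⋃ n, E n = Set.univ := by
    refine Set.eq_univ_of_forall fun x => ?_
    obtain ⟨m, hm⟩ := Set.mem_iUnion.1 (iUnion_spanningSets μ ▸ Set.mem_univ x)
    exact Set.mem_iUnion.2 ⟨max m ⌈|f x|⌉₊, monotone_spanningSets μ (le_max_left _ _) hm,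
      (Nat.le_ceil |f x|).trans (Nat.cast_le.2 (le_max_right _ _))⟩
  rw [← setLIntegral_univ, ← hE_cover, setLIntegral_iUnion_of_directed _ hE_mono.directed_le]
  exact iSup_le fun n => setLIntegral_enorm_rpow_le_of_forall_integral_mul_le hf hrs hB
    ((measurableSet_spanningSets μ n).inter (measurableSet_le hf.abs measurable_const))
    (measure_mono Set.inter_subset_left |>.trans_lt (measure_spanningSets_lt_top μ n)).ne
    fun x hx => hx.2

theorem eLpNorm_le_of_forall_integral_mul_le [SigmaFinite μ] (hf : AEStronglyMeasurable f μ)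
    (hrs : r.HolderConjugate s)
    (hB : ∀ φ : X → ℝ, (∀ t, MemLp φ t μ) →
      ENNReal.ofReal (∫ x, f x * φ x ∂μ) ≤ B * eLpNorm φ (.ofReal s) μ) :
    eLpNorm f (.ofReal r) μ ≤ B := by
  have hB' : ∀ φ : X → ℝ, (∀ t, MemLp φ t μ) →
      ENNReal.ofReal (∫ x, hf.mk f x * φ x ∂μ) ≤ B * eLpNorm φ (.ofReal s) μ := fun φ hφ => by
    rw [integral_congr_ae (by filter_upwards [hf.ae_eq_mk] with x hx; rw [← hx])]
    exact hB φ hφ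
  rw [eLpNorm_congr_ae hf.ae_eq_mk, eLpNorm_eq_lintegral_rpow_enorm_toReal
    (by simpa using hrs.pos) ofReal_ne_top, toReal_ofReal hrs.nonneg, one_div,
    ENNReal.rpow_inv_le_iff hrs.pos]
  exact lintegral_enorm_rpow_le_of_forall_integral_mul_le hf.stronglyMeasurable_mk.measurable
    hrs hB'

end Duality

section Projection

variable {X : Type*} [MeasurableSpace X] {μ : Measure X}

lemma ofReal_integral_mul_le_eLpNorm_mul_eLpNorm {u v : X → ℝ} (hu : AEStronglyMeasurable u μ)
    (hv : AEStronglyMeasurable v μ) {p q : ℝ≥0∞} [p.HolderConjugate q] :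
    ENNReal.ofReal (∫ x, u x * v x ∂μ) ≤ eLpNorm u p μ * eLpNorm v q μ :=
  calc ENNReal.ofReal (∫ x, u x * v x ∂μ) ≤ ∫⁻ x, ‖u x * v x‖ₑ ∂μ :=
        (Real.ofReal_le_enorm _).trans (enorm_integral_le_lintegral_enorm _)
    _ = eLpNorm (u • v) 1 μ := eLpNorm_one_eq_lintegral_enorm.symm
    _ ≤ eLpNorm u p μ * eLpNorm v q μ := eLpNorm_smul_le_mul_eLpNorm hv hu

lemma eLpNorm_one_sub_mul_le {w v : X → ℝ} (hw : AEStronglyMeasurable w μ)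
    (hv : AEStronglyMeasurable v μ) {p q r : ℝ} (hpq : p.HolderConjugate q) (hr : 0 < r) :
    eLpNorm (fun x => (1 - w x) * v x) (.ofReal r) μ
      ≤ eLpNorm v (.ofReal (r * q)) μ * eLpNorm (fun x => w x - 1) (.ofReal (r * p)) μ := by
  have := (hpq.symm.holderTriple_mul_left hr).ennrealOfReal
  calc eLpNorm (fun x => (1 - w x) * v x) (.ofReal r) μ
      = eLpNorm (v • fun x => w x - 1) (.ofReal r) μ := by
        rw [← eLpNorm_neg]
        congr with x
        simp only [Pi.neg_apply, smul_eq_mul, Pi.mul_apply]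
        ring
    _ ≤ _ := eLpNorm_smul_le_mul_eLpNorm (by fun_prop) hv

theorem eLpNorm_le_mul_eLpNorm_of_forall_integral_mul_eq [SigmaFinite μ]
    {P : (X → ℝ) → X → ℝ} {f u : X → ℝ} {r s : ℝ} {Cs : ℝ≥0∞} (hrs : r.HolderConjugate s)
    (hf : AEStronglyMeasurable f μ) (hu : AEStronglyMeasurable u μ)
    (hP : ∀ φ, MemLp φ 2 μ → AEStronglyMeasurable (P φ) μ)
    (hPnorm : ∀ h, MemLp h (ENNReal.ofReal s) μ →
      eLpNorm (P h) (ENNReal.ofReal s) μ ≤ Cs * eLpNorm h (ENNReal.ofReal s) μ)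
    (hfu : ∀ φ, MemLp φ 2 μ → ∫ x, f x * φ x ∂μ = ∫ x, u x * P φ x ∂μ) :
    eLpNorm f (.ofReal r) μ ≤ Cs * eLpNorm u (.ofReal r) μ := by
  have := hrs.ennrealOfReal
  refine eLpNorm_le_of_forall_integral_mul_le hf hrs fun φ hφ => ?_
  calc ENNReal.ofReal (∫ x, f x * φ x ∂μ)
      ≤ eLpNorm u (.ofReal r) μ * eLpNorm (P φ) (.ofReal s) μ := by
        rw [hfu φ (hφ 2)]
        exact ofReal_integral_mul_le_eLpNorm_mul_eLpNorm hu (hP φ (hφ 2))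
    _ ≤ eLpNorm u (.ofReal r) μ * (Cs * eLpNorm φ (.ofReal s) μ) := by
        gcongr
        exact hPnorm φ (hφ _)
    _ = Cs * eLpNorm u (.ofReal r) μ * eLpNorm φ (.ofReal s) μ := by ring

variable {L : Submodule ℝ (X → ℝ)} {Pw P : (X → ℝ) → X → ℝ}

lemma integral_mul_proj_eq (hL : ∀ l ∈ L, MemLp l 2 μ) (hPL : ∀ g, MemLp g 2 μ → P g ∈ L)
    (hPorth : ∀ g, MemLp g 2 μ → ∀ l ∈ L, ∫ x, (g x - P g x) * l x ∂μ = 0)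
    {f φ : X → ℝ} (hf : f ∈ L) (hφ : MemLp φ 2 μ) :
    ∫ x, f x * φ x ∂μ = ∫ x, f x * P φ x ∂μ := by
  have hfφ : Integrable (fun x => f x * φ x) μ := (hL f hf).integrable_mul hφ
  have hfPφ : Integrable (fun x => f x * P φ x) μ := (hL f hf).integrable_mul (hL _ (hPL φ hφ))
  rw [← sub_eq_zero, ← integral_sub hfφ hfPφ, ← hPorth φ hφ f hf]
  congr with x
  ring

lemma integral_weightedProj_sub_proj_mul_eq {w : X → ℝ} (hw : MemLp w ∞ μ)
    (hL : ∀ l ∈ L, MemLp l 2 μ) (hPwL : ∀ g, MemLp g 2 μ → Pw g ∈ L)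
    (hPworth : ∀ g, MemLp g 2 μ → ∀ l ∈ L, ∫ x, (g x - Pw g x) * l x * w x ∂μ = 0)
    (hPL : ∀ g, MemLp g 2 μ → P g ∈ L)
    (hPorth : ∀ g, MemLp g 2 μ → ∀ l ∈ L, ∫ x, (g x - P g x) * l x ∂μ = 0)
    {g l : X → ℝ} (hg : MemLp g 2 μ) (hl : l ∈ L) :
    ∫ x, (Pw g x - P (fun y => w y * g y) x) * l x ∂μ = ∫ x, (1 - w x) * Pw g x * l x ∂μ := by
  set wg := fun y => w y * g y
  have hwg : MemLp wg 2 μ := hg.mul' hw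
  have hPwg := hL _ (hPwL g hg)
  have hPwg' := hL _ (hPL _ hwg)
  have hl₂ := hL l hl
  have h₁ : Integrable (fun x => (Pw g x - P wg x) * l x) μ :=
    (hPwg.sub hPwg').integrable_mul hl₂
  have h₂ : Integrable (fun x => (1 - w x) * Pw g x * l x) μ :=
    (hPwg.mul' (r := 2) ((memLp_top_const 1).sub hw)).integrable_mul hl₂
  have h₃ : Integrable (fun x => (wg x - P wg x) * l x) μ := (hwg.sub hPwg').integrable_mul hl₂
  have h₄ : Integrable (fun x => (g x - Pw g x) * l x * w x) μ :=
    ((hg.sub hPwg).integrable_mul hl₂).mul_of_top_left hw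
  rw [← sub_eq_zero, ← integral_sub h₁ h₂]
  calc _ = ∫ x, ((wg x - P wg x) * l x - (g x - Pw g x) * l x * w x) ∂μ := by
        congr with x
        ring
    _ = 0 := by rw [integral_sub h₃ h₄, hPorth _ hwg l hl, hPworth g hg l hl, sub_zero]

end Projection

/-- **Lemma (difference of weighted and unweighted projections, part (i)).**
Let `Pw` and `P` be the weighted projections in `L₂(μ)` onto a closed subspace `L`
relative to the weights `w` and `1`, and `M_w` multiplication by `w`. For conjugate pairs
`r⁻¹ + s⁻¹ = 1` and `p⁻¹ + q⁻¹ = 1`, if `P` is bounded on `L_s(μ)` with norm at most `Cs`,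
then `‖(Pw − P M_w) g‖_r ≤ Cs · ‖Pw g‖_{rq} · ‖w − 1‖_{rp}` for all `g ∈ L₂(μ)`. -/
theorem difference_of_projections_i
    {X : Type*} [MeasurableSpace X] (μ : Measure X) [SigmaFinite μ]
    (w : X → ℝ) (hwm : Measurable w)
    (hw : ∃ c C : ℝ, 0 < c ∧ ∀ x, c ≤ w x ∧ w x ≤ C)
    (L : Submodule ℝ (X → ℝ)) (hL : ∀ l ∈ L, MemLp l 2 μ)
    (Pw P : (X → ℝ) → (X → ℝ))
    (hPwL : ∀ g, MemLp g 2 μ → Pw g ∈ L)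
    (hPworth : ∀ g, MemLp g 2 μ → ∀ l ∈ L, ∫ x, (g x - Pw g x) * l x * w x ∂μ = 0)
    (hPL : ∀ g, MemLp g 2 μ → P g ∈ L)
    (hPorth : ∀ g, MemLp g 2 μ → ∀ l ∈ L, ∫ x, (g x - P g x) * l x ∂μ = 0)
    (r s p q : ℝ) (hr : 1 < r) (hrs : 1 / r + 1 / s = 1)
    (hp : 1 < p) (hpq : 1 / p + 1 / q = 1)
    (Cs : ℝ≥0∞)
    (hPnorm : ∀ h, MemLp h (ENNReal.ofReal s) μ →
      eLpNorm (P h) (ENNReal.ofReal s) μ ≤ Cs * eLpNorm h (ENNReal.ofReal s) μ)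
    (g : X → ℝ) (hg : MemLp g 2 μ) :
    eLpNorm (fun x => Pw g x - P (fun y => w y * g y) x) (ENNReal.ofReal r) μ
      ≤ Cs * eLpNorm (Pw g) (ENNReal.ofReal (r * q)) μ *
          eLpNorm (fun x => w x - 1) (ENNReal.ofReal (r * p)) μ := by
  obtain ⟨c, C, hc, hwcC⟩ := hw
  have hw_top : MemLp w ∞ μ := memLp_top_of_bound hwm.aestronglyMeasurable C <|
    ae_of_all _ fun x => by
      rw [Real.norm_eq_abs, abs_of_pos (hc.trans_le (hwcC x).1)]
      exact (hwcC x).2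
  have hrs' : r.HolderConjugate s :=
    Real.holderConjugate_iff.2 ⟨hr, by simpa only [one_div] using hrs⟩
  have hpq' : p.HolderConjugate q :=
    Real.holderConjugate_iff.2 ⟨hp, by simpa only [one_div] using hpq⟩
  set f := fun x => Pw g x - P (fun y => w y * g y) x
  set u := fun x => (1 - w x) * Pw g x
  have hPwg := hL _ (hPwL g hg)
  have hf : f ∈ L := L.sub_mem (hPwL g hg) (hPL _ (hg.mul' hw_top))
  have hfu : ∀ φ, MemLp φ 2 μ → ∫ x, f x * φ x ∂μ = ∫ x, u x * P φ x ∂μ := fun φ hφ => by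
    rw [integral_mul_proj_eq hL hPL hPorth hf hφ,
      integral_weightedProj_sub_proj_mul_eq hw_top hL hPwL hPworth hPL hPorth hg (hPL φ hφ)]
  calc eLpNorm f (.ofReal r) μ ≤ Cs * eLpNorm u (.ofReal r) μ :=
        eLpNorm_le_mul_eLpNorm_of_forall_integral_mul_eq hrs' (hL f hf).aestronglyMeasurable
          ((hwm.const_sub 1).aestronglyMeasurable.mul hPwg.aestronglyMeasurable)
          (fun φ hφ => (hL _ (hPL φ hφ)).aestronglyMeasurable) hPnorm hfu
    _ ≤ Cs * (eLpNorm (Pw g) (.ofReal (r * q)) μ *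
          eLpNorm (fun x => w x - 1) (.ofReal (r * p)) μ) := by
        gcongr
        exact eLpNorm_one_sub_mul_le hwm.aestronglyMeasurable hPwg.aestronglyMeasurable hpq'
          hrs'.pos
    _ = _ := (mul_assoc _ _ _).symm
end

section
/- Let X_1,…,X_n be i.i.d. with law P on a measurable space (X,A), let m ≤ n, and let f, g: X^m → ℝ be symmetric measurable functions in L_2(P^m) that are degenerate relative to P. Then E[U_n f] = 0 and E[(U_n f)(U_n g)] = (1/binom(n,m)) · E[f(X_1,…,X_m) g(X_1,…,X_m)]; in particular Var(U_n f) = (1/binom(n,m)) · E[f(X_1,…,X_m)²]. -/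
open MeasureTheory
open scoped Finset

/-! Expanding the product, `E[(U_n f)(U_n g)]` is a normalized double sum, over pairs of
injections `ι κ : Fin m ↪ Fin n`, of `E[f(X ∘ ι) g(X ∘ κ)]`. If the ranges of `ι` and `κ` differ,
some coordinate `X_j` enters `f` but not `g`; integrating it out first kills the term by the
degeneracy of `f`. If the ranges agree, then `κ = ι ∘ σ` for a permutation `σ`, so by the symmetry
of `g` and because `X ∘ ι` has law `P^m` the term is `E[f g]`. Each `ι` has exactly `m!` such
partners `κ`, and `((n-m)!/n!)² · n!/(n-m)! · m! = 1/binom(n,m)`. The mean vanishes by the same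
integration over one coordinate. -/

/-- The `U`-statistic of order `m` of a sample of size `n`. -/
noncomputable def Ustat {X : Type*} (n m : ℕ) (f : (Fin m → X) → ℝ)
    (x : Fin n → X) : ℝ :=
  (((n - m).factorial : ℝ) / (n.factorial : ℝ)) *
    ∑ ι : Fin m ↪ Fin n, f (fun i => x (ι i))

theorem Function.Embedding.exists_perm_of_range_eq {α β : Type*} {ι κ : α ↪ β}
    (h : Set.range ι = Set.range κ) : ∃ σ : Equiv.Perm α, ∀ a, ι (σ a) = κ a :=
  ⟨(Equiv.ofInjective κ κ.injective).trans
      ((Equiv.setCongr h.symm).trans (Equiv.ofInjective ι ι.injective).symm),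
    fun _ => Equiv.apply_ofInjective_symm ι.injective _⟩

theorem Function.Embedding.exists_apply_notMem_range_of_range_ne {α β : Type*} [Finite α]
    {ι κ : α ↪ β} (h : Set.range ι ≠ Set.range κ) : ∃ a, ι a ∉ Set.range κ := by
  by_contra! hsub
  refine h (Set.eq_of_subset_of_ncard_le (Set.range_subset_iff.2 hsub) ?_ (Set.finite_range κ))
  rw [Set.ncard_range_of_injective ι.injective, Set.ncard_range_of_injective κ.injective]

theorem Function.Embedding.card_filter_range_eq {α β : Type*} [Fintype α] [Fintype β]
    (ι : α ↪ β) :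
    #{κ : α ↪ β | Set.range κ = Set.range ι} = (Fintype.card α).factorial := by
  classical
  have himage : ({κ : α ↪ β | Set.range κ = Set.range ι} : Finset (α ↪ β))
      = Finset.univ.image fun σ : Equiv.Perm α => σ.toEmbedding.trans ι := by
    ext κ
    simp only [Finset.mem_filter, Finset.mem_univ, true_and, Finset.mem_image]
    constructor
    · intro h
      obtain ⟨σ, hσ⟩ := exists_perm_of_range_eq h.symm
      exact ⟨σ, DFunLike.ext _ _ hσ⟩
    · rintro ⟨σ, rfl⟩
      exact σ.surjective.range_comp ι
  have hinj : Function.Injective fun σ : Equiv.Perm α => σ.toEmbedding.trans ι :=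
    fun σ τ h => Equiv.ext fun a => ι.injective (DFunLike.congr_fun h a)
  rw [himage, Finset.card_image_of_injective _ hinj, Finset.card_univ, Fintype.card_perm]

theorem Nat.cast_factorial_sub_div_factorial {m n : ℕ} (hmn : m ≤ n) :
    ((n - m).factorial / n.factorial : ℝ) = 1 / n.descFactorial m := by
  have hD : (n.descFactorial m : ℝ) ≠ 0 :=
    Nat.cast_ne_zero.2 fun h => (Nat.descFactorial_eq_zero_iff_lt.1 h).not_ge hmn
  rw [← Nat.factorial_mul_descFactorial hmn, Nat.cast_mul]
  field_simp

theorem MeasureTheory.MeasurePreserving.integral_comp_of_aestronglyMeasurable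
    {α β E : Type*} [MeasurableSpace α] [MeasurableSpace β] [NormedAddCommGroup E]
    [NormedSpace ℝ E] {μ : Measure α} {ν : Measure β} {e : α → β} (he : MeasurePreserving e μ ν)
    {g : β → E} (hg : AEStronglyMeasurable g ν) :
    ∫ x, g (e x) ∂μ = ∫ y, g y ∂ν := by
  rw [← he.map_eq, integral_map he.measurable.aemeasurable (he.map_eq ▸ hg)]

section

variable {X : Type*} [MeasurableSpace X] (P : Measure X) [IsProbabilityMeasure P]
  {α β : Type*} [Fintype α] [Fintype β] {m : ℕ}

theorem measurePreserving_comp_embedding (e : α ↪ β) :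
    MeasurePreserving (fun x : β → X => x ∘ e)
      (Measure.pi fun _ => P) (Measure.pi fun _ => P) := by
  classical
  have hmeas : Measurable fun x : β → X => x ∘ e :=
    measurable_pi_lambda _ fun a => measurable_pi_apply _
  refine ⟨hmeas, (Measure.pi_eq fun s hs => ?_).symm⟩
  have hpre : (fun x : β → X => x ∘ e) ⁻¹' Set.univ.pi s
      = Set.univ.pi (Function.extend e s fun _ => Set.univ) := by
    ext x
    simp only [Set.mem_preimage, Set.mem_univ_pi, Function.comp_apply]
    refine ⟨fun h b => ?_, fun h a => by simpa [e.injective.extend_apply] using h (e a)⟩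
    by_cases hb : ∃ a, e a = b
    · obtain ⟨a, rfl⟩ := hb
      simpa [e.injective.extend_apply] using h a
    · simp [Function.extend_apply' _ _ _ hb]
  rw [Measure.map_apply hmeas (.univ_pi hs), hpre, Measure.pi_pi,
    ← Finset.prod_subset (Finset.subset_univ (Finset.univ.map e)), Finset.prod_map]
  · simp [e.injective.extend_apply]
  · intro b _ hb
    have hb' : ¬ ∃ a, e a = b := by simpa using hb
    simp [Function.extend_apply' _ _ _ hb']

theorem measurePreserving_update [DecidableEq α] (i : α) :
    MeasurePreserving (fun p : (α → X) × X => Function.update p.1 i p.2)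
      ((Measure.pi fun _ => P).prod P) (Measure.pi fun _ => P) := by
  refine ⟨measurable_update', (Measure.pi_eq fun s hs => ?_).symm⟩
  have hpre : (fun p : (α → X) × X => Function.update p.1 i p.2) ⁻¹' Set.univ.pi s
      = Set.univ.pi (Function.update s i Set.univ) ×ˢ s i := by
    ext ⟨x, y⟩
    simp only [Set.mem_preimage, Set.mem_univ_pi, Set.mem_prod]
    refine ⟨fun h => ⟨fun j => ?_, by simpa using h i⟩, fun ⟨hx, hy⟩ j => ?_⟩
    · by_cases hj : j = i
      · simp [hj]
      · simpa [hj] using h j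
    · by_cases hj : j = i
      · subst hj; simpa using hy
      · simpa [hj] using hx j
  rw [Measure.map_apply measurable_update' (.univ_pi hs), hpre, Measure.prod_prod, Measure.pi_pi,
    Finset.prod_congr rfl fun j _ => Function.apply_update (fun _ => P) s i Set.univ j,
    Finset.prod_update_of_mem (Finset.mem_univ i), measure_univ, one_mul,
    Finset.sdiff_singleton_eq_erase, Finset.prod_erase_mul _ _ (Finset.mem_univ i)]

theorem integral_pi_eq_integral_integral_update [DecidableEq α] (i : α) {F : (α → X) → ℝ}
    (hF : Integrable F (Measure.pi fun _ => P)) :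
    ∫ x, F x ∂(Measure.pi fun _ => P)
      = ∫ x, ∫ y, F (Function.update x i y) ∂P ∂(Measure.pi fun _ => P) := by
  have hmp := measurePreserving_update P i
  rw [← hmp.integral_comp_of_aestronglyMeasurable hF.aestronglyMeasurable]
  exact integral_prod _ (hmp.integrable_comp_of_integrable hF)

theorem integrable_mul_comp_embedding {f g : (α → X) → ℝ}
    (hf : MemLp f 2 (Measure.pi fun _ => P)) (hg : MemLp g 2 (Measure.pi fun _ => P))
    (ι κ : α ↪ β) :
    Integrable (fun x => f (x ∘ ι) * g (x ∘ κ)) (Measure.pi fun _ => P) :=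
  (hf.comp_measurePreserving (measurePreserving_comp_embedding P ι)).integrable_mul
    (hg.comp_measurePreserving (measurePreserving_comp_embedding P κ))

theorem integral_mul_comp_embedding_of_apply_notMem_range [DecidableEq α] [DecidableEq β]
    {f g : (α → X) → ℝ} (hf : MemLp f 2 (Measure.pi fun _ => P))
    (hg : MemLp g 2 (Measure.pi fun _ => P)) {ι κ : α ↪ β} {a : α} (ha : ι a ∉ Set.range κ)
    (hfdeg : ∀ᵐ x ∂(Measure.pi fun _ => P), ∫ y, f (Function.update x a y) ∂P = 0) :
    ∫ x, f (x ∘ ι) * g (x ∘ κ) ∂(Measure.pi fun _ => P) = 0 := by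
  rw [integral_pi_eq_integral_integral_update P (ι a) (integrable_mul_comp_embedding P hf hg ι κ)]
  refine integral_eq_zero_of_ae ?_
  filter_upwards [(measurePreserving_comp_embedding P ι).quasiMeasurePreserving.ae hfdeg]
    with x hx
  simp_rw [Function.update_comp_eq_of_injective x ι.injective,
    Function.update_comp_eq_of_forall_ne x _ fun b hb => ha ⟨b, hb⟩]
  rw [integral_mul_const, hx, zero_mul, Pi.zero_apply]

theorem integral_mul_comp_embedding_of_range_eq {f g : (α → X) → ℝ}
    (hf : AEStronglyMeasurable f (Measure.pi fun _ => P))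
    (hg : AEStronglyMeasurable g (Measure.pi fun _ => P))
    (hgsym : ∀ σ : Equiv.Perm α, ∀ x, g (x ∘ σ) = g x) {ι κ : α ↪ β}
    (h : Set.range ι = Set.range κ) :
    ∫ x, f (x ∘ ι) * g (x ∘ κ) ∂(Measure.pi fun _ => P)
      = ∫ y, f y * g y ∂(Measure.pi fun _ => P) := by
  obtain ⟨σ, hσ⟩ := Function.Embedding.exists_perm_of_range_eq h
  have hκ : ∀ x : β → X, g (x ∘ κ) = g (x ∘ ι) := fun x => by
    rw [← hgsym σ (x ∘ ι)]
    congr 1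
    ext a
    simp [hσ]
  simp_rw [hκ]
  exact (measurePreserving_comp_embedding P ι).integral_comp_of_aestronglyMeasurable (hf.mul hg)

theorem integral_mul_comp_embedding [DecidableEq α] [DecidableEq β] {f g : (α → X) → ℝ}
    (hf : MemLp f 2 (Measure.pi fun _ => P)) (hg : MemLp g 2 (Measure.pi fun _ => P))
    (hgsym : ∀ σ : Equiv.Perm α, ∀ x, g (x ∘ σ) = g x)
    (hfdeg : ∀ a : α, ∀ᵐ x ∂(Measure.pi fun _ => P), ∫ y, f (Function.update x a y) ∂P = 0)
    (ι κ : α ↪ β) :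
    ∫ x, f (x ∘ ι) * g (x ∘ κ) ∂(Measure.pi fun _ => P)
      = if Set.range κ = Set.range ι then ∫ y, f y * g y ∂(Measure.pi fun _ => P) else 0 := by
  split_ifs with h
  · exact integral_mul_comp_embedding_of_range_eq P hf.1 hg.1 hgsym h.symm
  · obtain ⟨a, ha⟩ := Function.Embedding.exists_apply_notMem_range_of_range_ne (Ne.symm h)
    exact integral_mul_comp_embedding_of_apply_notMem_range P hf hg ha (hfdeg a)

omit [MeasurableSpace X] in
theorem ustat_eq_mul_sum_comp {n : ℕ} (f : (Fin m → X) → ℝ) (x : Fin n → X) :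
    Ustat n m f x = ((n - m).factorial / n.factorial : ℝ) * ∑ ι : Fin m ↪ Fin n, f (x ∘ ι) :=
  rfl

theorem integral_ustat_eq_zero (n : ℕ) (hm : 1 ≤ m) {f : (Fin m → X) → ℝ}
    (hf : Integrable f (Measure.pi fun _ => P))
    (hfdeg : ∀ i : Fin m, ∀ᵐ x ∂(Measure.pi fun _ => P),
      ∫ y, f (Function.update x i y) ∂P = 0) :
    ∫ x, Ustat n m f x ∂(Measure.pi fun _ => P) = 0 := by
  have hzero : ∫ y, f y ∂(Measure.pi fun _ => P) = 0 := by
    rw [integral_pi_eq_integral_integral_update P ⟨0, hm⟩ hf]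
    exact integral_eq_zero_of_ae (hfdeg _)
  have hmp (ι : Fin m ↪ Fin n) := measurePreserving_comp_embedding P (X := X) ι
  have hint (ι : Fin m ↪ Fin n) : Integrable (fun x => f (x ∘ ι)) (Measure.pi fun _ => P) :=
    (hmp ι).integrable_comp_of_integrable hf
  simp_rw [ustat_eq_mul_sum_comp]
  rw [integral_const_mul, integral_finsetSum _ fun ι _ => hint ι,
    Finset.sum_eq_zero fun ι _ => ((hmp ι).integral_comp_of_aestronglyMeasurable hf.1).trans hzero,
    mul_zero]

theorem integral_ustat_mul_ustat {n : ℕ} (hmn : m ≤ n) {f g : (Fin m → X) → ℝ}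
    (hf : MemLp f 2 (Measure.pi fun _ => P)) (hg : MemLp g 2 (Measure.pi fun _ => P))
    (hgsym : ∀ σ : Equiv.Perm (Fin m), ∀ x, g (x ∘ σ) = g x)
    (hfdeg : ∀ i : Fin m, ∀ᵐ x ∂(Measure.pi fun _ => P),
      ∫ y, f (Function.update x i y) ∂P = 0) :
    ∫ x, Ustat n m f x * Ustat n m g x ∂(Measure.pi fun _ => P)
      = 1 / n.choose m * ∫ y, f y * g y ∂(Measure.pi fun _ => P) := by
  set V := ∫ y, f y * g y ∂(Measure.pi fun _ => P)
  set D : ℝ := (n.descFactorial m : ℝ)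
  have hexpand (x : Fin n → X) : Ustat n m f x * Ustat n m g x
      = (1 / D) ^ 2 * ∑ ι : Fin m ↪ Fin n, ∑ κ : Fin m ↪ Fin n, f (x ∘ ι) * g (x ∘ κ) := by
    rw [ustat_eq_mul_sum_comp, ustat_eq_mul_sum_comp, Nat.cast_factorial_sub_div_factorial hmn,
      ← Finset.sum_mul_sum]
    ring
  have hint := integrable_mul_comp_embedding P hf hg (β := Fin n)
  calc ∫ x, Ustat n m f x * Ustat n m g x ∂(Measure.pi fun _ => P)
      = (1 / D) ^ 2 * ∑ ι : Fin m ↪ Fin n, ∑ κ : Fin m ↪ Fin n,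
          ∫ x, f (x ∘ ι) * g (x ∘ κ) ∂(Measure.pi fun _ => P) := by
        simp_rw [hexpand]
        rw [integral_const_mul, integral_finsetSum _ fun ι _ =>
          integrable_finsetSum _ fun κ _ => hint ι κ]
        simp_rw [integral_finsetSum _ fun κ _ => hint _ κ]
    _ = (1 / D) ^ 2 * ∑ ι : Fin m ↪ Fin n, ∑ κ : Fin m ↪ Fin n,
          if Set.range κ = Set.range ι then V else 0 := by
        simp_rw [integral_mul_comp_embedding P hf hg hgsym hfdeg, V]
    _ = (1 / D) ^ 2 * (D * (m.factorial * V)) := by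
        simp [Finset.sum_ite, Function.Embedding.card_filter_range_eq, D]
    _ = 1 / n.choose m * V := by
        have hD : D = m.factorial * n.choose m := by
          simp only [D, Nat.descFactorial_eq_factorial_mul_choose, Nat.cast_mul]
        have hchoose : (n.choose m : ℝ) ≠ 0 := Nat.cast_ne_zero.2 (Nat.choose_pos hmn).ne'
        rw [hD]
        field_simp

end

theorem degenerate_ustat_moments_general
    {X : Type*} [MeasurableSpace X] (P : Measure X) [IsProbabilityMeasure P]
    (m n : ℕ) (hm : 1 ≤ m) (hmn : m ≤ n)
    (f g : (Fin m → X) → ℝ)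
    (hf2 : MemLp f 2 (Measure.pi fun _ : Fin m => P))
    (hg2 : MemLp g 2 (Measure.pi fun _ : Fin m => P))
    (hfsym : ∀ σ : Equiv.Perm (Fin m), ∀ x, f (x ∘ σ) = f x)
    (hgsym : ∀ σ : Equiv.Perm (Fin m), ∀ x, g (x ∘ σ) = g x)
    (hfdeg : ∀ i : Fin m, ∀ᵐ x ∂(Measure.pi fun _ : Fin m => P),
      ∫ y, f (Function.update x i y) ∂P = 0) :
    (∫ x : Fin n → X, Ustat n m f x ∂(Measure.pi fun _ => P)) = 0 ∧
    (∫ x : Fin n → X, Ustat n m f x * Ustat n m g x ∂(Measure.pi fun _ => P))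
        = (1 / (n.choose m : ℝ)) *
            ∫ y : Fin m → X, f y * g y ∂(Measure.pi fun _ : Fin m => P) ∧
    (∫ x : Fin n → X, (Ustat n m f x) ^ 2 ∂(Measure.pi fun _ => P))
        - (∫ x : Fin n → X, Ustat n m f x ∂(Measure.pi fun _ => P)) ^ 2
        = (1 / (n.choose m : ℝ)) *
            ∫ y : Fin m → X, (f y) ^ 2 ∂(Measure.pi fun _ : Fin m => P) := by
  have hmean := integral_ustat_eq_zero P n hm (hf2.integrable one_le_two) hfdeg
  refine ⟨hmean, integral_ustat_mul_ustat P hmn hf2 hg2 hgsym hfdeg, ?_⟩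
  simp_rw [hmean, sq]
  rw [integral_ustat_mul_ustat P hmn hf2 hf2 hfsym hfdeg, mul_zero, sub_zero]

/-- **Lemma (moments of degenerate U-statistics of equal order).**
If `f, g : X^m → ℝ` are symmetric, `P`-degenerate and square integrable, then
`E[U_n f] = 0`, `E[(U_n f)(U_n g)] = binom(n,m)⁻¹ E[f·g]`, and in particular
`Var(U_n f) = binom(n,m)⁻¹ E[f²]`. -/
theorem degenerate_ustat_moments
    {X : Type*} [MeasurableSpace X] (P : Measure X) [IsProbabilityMeasure P]
    (m n : ℕ) (hm : 1 ≤ m) (hmn : m ≤ n)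
    (f g : (Fin m → X) → ℝ) (hfm : Measurable f) (hgm : Measurable g)
    (hf2 : MemLp f 2 (Measure.pi fun _ : Fin m => P))
    (hg2 : MemLp g 2 (Measure.pi fun _ : Fin m => P))
    (hfsym : ∀ σ : Equiv.Perm (Fin m), ∀ x, f (x ∘ σ) = f x)
    (hgsym : ∀ σ : Equiv.Perm (Fin m), ∀ x, g (x ∘ σ) = g x)
    (hfdeg : ∀ i : Fin m, ∀ᵐ x ∂(Measure.pi fun _ : Fin m => P),
      ∫ y, f (Function.update x i y) ∂P = 0)
    (hgdeg : ∀ i : Fin m, ∀ᵐ x ∂(Measure.pi fun _ : Fin m => P),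
      ∫ y, g (Function.update x i y) ∂P = 0) :
    (∫ x : Fin n → X, Ustat n m f x ∂(Measure.pi fun _ => P)) = 0 ∧
    (∫ x : Fin n → X, Ustat n m f x * Ustat n m g x ∂(Measure.pi fun _ => P))
        = (1 / (n.choose m : ℝ)) *
            ∫ y : Fin m → X, f y * g y ∂(Measure.pi fun _ : Fin m => P) ∧
    (∫ x : Fin n → X, (Ustat n m f x) ^ 2 ∂(Measure.pi fun _ => P))
        - (∫ x : Fin n → X, Ustat n m f x ∂(Measure.pi fun _ => P)) ^ 2
        = (1 / (n.choose m : ℝ)) *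
            ∫ y : Fin m → X, (f y) ^ 2 ∂(Measure.pi fun _ : Fin m => P) :=
  degenerate_ustat_moments_general P m n hm hmn f g hf2 hg2 hfsym hgsym hfdeg
end

section
/- In the missing data model, let â and b̂ be bounded measurable functions on Z. Then the first-order bias identity (double robustness) holds: E[ A·â(Z)·(Y − b̂(Z)) + b̂(Z) ] − E[ b(Z) ] = − E[ ((â − a)(b̂ − b)/a)(Z) ] = − ∫ (â − a)(b̂ − b) · g dν. -/
/-!
Conditioning on `Z` and pulling out the `Z`-measurable factors `ahat(Z)` and `ahat(Z) bhat(Z)`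
replaces `A Y` by `b(Z)/a(Z)` and `A` by `1/a(Z)`, so the integrand has the same expectation as
`(ahat (b - bhat)/a + bhat)(Z)`; subtracting `b(Z)` leaves exactly `-((ahat - a)(bhat - b)/a)(Z)`.
Since the law of `Z` is `f ν`, this expectation is `-∫ (ahat - a)(bhat - b) g dν`.
-/

open MeasureTheory

/-- Augmented inverse probability weighting. -/
def aipw {Ω : Type*} (A Y U V : Ω → ℝ) : Ω → ℝ := fun ω => A ω * U ω * (Y ω - V ω) + V ω

theorem condExp_aipw_ae_eq {Ω : Type*} {m m₀ : MeasurableSpace Ω} {P : Measure Ω}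
    [IsFiniteMeasure P] (hm : m ≤ m₀) {A Y U V π β : Ω → ℝ} {C : ℝ}
    (hU : StronglyMeasurable[m] U) (hV : StronglyMeasurable[m] V)
    (hUC : ∀ ω, ‖U ω‖ ≤ C) (hVC : ∀ ω, ‖V ω‖ ≤ C)
    (hA : Integrable A P) (hAY : Integrable (A * Y) P)
    (hπ : P[A|m] =ᵐ[P] π) (hβ : P[A * Y|m] =ᵐ[P] β) :
    P[aipw A Y U V|m] =ᵐ[P] fun ω => U ω * (β ω - V ω * π ω) + V ω := by
  have hUV_C : ∀ ω, ‖(U * V) ω‖ ≤ C * C := fun ω => by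
    rw [Pi.mul_apply, norm_mul]
    exact mul_le_mul (hUC ω) (hVC ω) (norm_nonneg _) ((norm_nonneg _).trans (hUC ω))
  have hU_AY : Integrable (U * (A * Y)) P :=
    hAY.bdd_mul (hU.mono hm).aestronglyMeasurable (ae_of_all _ hUC)
  have hUV_A : Integrable (U * V * A) P :=
    hA.bdd_mul ((hU.mul hV).mono hm).aestronglyMeasurable (ae_of_all _ hUV_C)
  have hV_int : Integrable V P :=
    .of_bound (hV.mono hm).aestronglyMeasurable C (ae_of_all _ hVC)
  have h_split : aipw A Y U V = U * (A * Y) - U * V * A + V := by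
    ext ω; simp only [aipw, Pi.add_apply, Pi.sub_apply, Pi.mul_apply]; ring
  rw [h_split]
  filter_upwards [condExp_add (hU_AY.sub hUV_A) hV_int m, condExp_sub hU_AY hUV_A m,
    condExp_stronglyMeasurable_mul_of_bound hm hU hAY C (ae_of_all _ hUC),
    condExp_stronglyMeasurable_mul_of_bound hm (hU.mul hV) hA (C * C) (ae_of_all _ hUV_C),
    hπ, hβ] with ω h_add h_sub h_AY h_A hπω hβω
  rw [h_add, Pi.add_apply, h_sub, condExp_of_stronglyMeasurable hm hV hV_int]
  simp only [Pi.sub_apply, h_AY, h_A, Pi.mul_apply, hπω, hβω]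
  ring

theorem integral_comp_eq_integral_mul_of_map_eq_withDensity {Ω 𝒵 : Type*} [MeasurableSpace Ω]
    [MeasurableSpace 𝒵] {P : Measure Ω} {ν : Measure 𝒵} {Z : Ω → 𝒵} {f φ : 𝒵 → ℝ}
    (hZ : AEMeasurable Z P) (hf : Measurable f) (hf0 : ∀ z, 0 ≤ f z)
    (hlaw : P.map Z = ν.withDensity fun z => ENNReal.ofReal (f z))
    (hφ : AEStronglyMeasurable φ (P.map Z)) :
    ∫ ω, φ (Z ω) ∂P = ∫ z, f z * φ z ∂ν := by
  rw [← integral_map hZ hφ, hlaw]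
  change ∫ z, φ z ∂ν.withDensity (fun z => ((f z).toNNReal : ENNReal)) = _
  rw [integral_withDensity_eq_integral_smul hf.real_toNNReal]
  refine integral_congr_ae (ae_of_all _ fun z => ?_)
  simp only [NNReal.smul_def, Real.coe_toNNReal _ (hf0 z), smul_eq_mul]

theorem integrable_of_forall_eq_zero_or_eq_one {Ω : Type*} [MeasurableSpace Ω] {P : Measure Ω}
    [IsFiniteMeasure P] {X : Ω → ℝ} (hX : Measurable X) (h01 : ∀ ω, X ω = 0 ∨ X ω = 1) :
    Integrable X P :=
  .of_bound hX.aestronglyMeasurable 1 (ae_of_all _ fun ω => by rcases h01 ω with h | h <;> simp [h])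

theorem missing_data_double_robustness_general
    {Ω 𝒵 : Type*} [MeasurableSpace Ω] [MeasurableSpace 𝒵]
    (P : Measure Ω) [IsProbabilityMeasure P]
    (ν : Measure 𝒵)
    (Z : Ω → 𝒵) (A Y : Ω → ℝ)
    (hZ : Measurable Z) (hAm : Measurable A) (hYm : Measurable Y)
    (hA01 : ∀ ω, A ω = 0 ∨ A ω = 1) (hY01 : ∀ ω, Y ω = 0 ∨ Y ω = 1)
    (a b f : 𝒵 → ℝ) (ham : Measurable a) (hbm : Measurable b) (hfm : Measurable f)
    (hf0 : ∀ z, 0 ≤ f z)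
    (ε : ℝ) (hε : 0 < ε)
    (ha : ∀ z, ε ≤ 1 / a z ∧ 1 / a z ≤ 1 - ε)
    (hb : ∀ z, ε ≤ b z ∧ b z ≤ 1 - ε)
    (hlaw : Measure.map Z P = ν.withDensity fun z => ENNReal.ofReal (f z))
    (hcondA : P[A|MeasurableSpace.comap Z inferInstance]
        =ᵐ[P] fun ω => 1 / a (Z ω))
    (hcondAY : P[fun ω => A ω * Y ω|MeasurableSpace.comap Z inferInstance]
        =ᵐ[P] fun ω => b (Z ω) / a (Z ω))
    (ahat bhat : 𝒵 → ℝ) (hahatm : Measurable ahat) (hbhatm : Measurable bhat)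
    (M : ℝ) (hahatb : ∀ z, |ahat z| ≤ M) (hbhatb : ∀ z, |bhat z| ≤ M) :
    ((∫ ω, (A ω * ahat (Z ω) * (Y ω - bhat (Z ω)) + bhat (Z ω)) ∂P)
        - ∫ ω, b (Z ω) ∂P
      = - ∫ ω, (ahat (Z ω) - a (Z ω)) * (bhat (Z ω) - b (Z ω)) / a (Z ω) ∂P)
    ∧ ((∫ ω, (A ω * ahat (Z ω) * (Y ω - bhat (Z ω)) + bhat (Z ω)) ∂P)
        - ∫ ω, b (Z ω) ∂P
      = - ∫ z, (ahat z - a z) * (bhat z - b z) * (f z / a z) ∂ν) := by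
  have ha0 : ∀ z, a z ≠ 0 := fun z h => by simpa [h] using hε.trans_le (ha z).1
  have hZm : Measurable[MeasurableSpace.comap Z inferInstance] Z := comap_measurable Z
  have hA : Integrable A P := integrable_of_forall_eq_zero_or_eq_one hAm hA01
  have hAY : Integrable (fun ω => A ω * Y ω) P :=
    integrable_of_forall_eq_zero_or_eq_one (hAm.mul hYm) fun ω => by
      rcases hA01 ω with h | h <;> simp [h, hY01 ω]
  have hB : Integrable (fun ω => b (Z ω)) P := .of_bound (hbm.comp hZ).aestronglyMeasurable 1
    (ae_of_all _ fun ω => abs_le.2 ⟨by linarith [hb (Z ω)], by linarith [hb (Z ω)]⟩)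
  have h_cond : P[fun ω => A ω * ahat (Z ω) * (Y ω - bhat (Z ω)) + bhat (Z ω)|
        MeasurableSpace.comap Z inferInstance]
      =ᵐ[P] fun ω => ahat (Z ω) * (b (Z ω) / a (Z ω) - bhat (Z ω) * (1 / a (Z ω))) + bhat (Z ω) :=
    condExp_aipw_ae_eq hZ.comap_le
      (hahatm.comp hZm).stronglyMeasurable (hbhatm.comp hZm).stronglyMeasurable
      (fun ω => hahatb (Z ω)) (fun ω => hbhatb (Z ω)) hA hAY hcondA hcondAY
  have key : (∫ ω, (A ω * ahat (Z ω) * (Y ω - bhat (Z ω)) + bhat (Z ω)) ∂P) - ∫ ω, b (Z ω) ∂P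
      = - ∫ ω, (ahat (Z ω) - a (Z ω)) * (bhat (Z ω) - b (Z ω)) / a (Z ω) ∂P := by
    rw [← integral_condExp hZ.comap_le, integral_congr_ae h_cond,
      ← integral_sub (integrable_condExp.congr h_cond) hB, ← integral_neg]
    refine integral_congr_ae (ae_of_all _ fun ω => ?_)
    field_simp [ha0 (Z ω)]
    ring
  refine ⟨key, key.trans (congrArg Neg.neg ?_)⟩
  refine (integral_comp_eq_integral_mul_of_map_eq_withDensity hZ.aemeasurable hfm hf0 hlaw
    (((hahatm.sub ham).mul (hbhatm.sub hbm)).div ham).aestronglyMeasurable).trans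
    (integral_congr_ae (ae_of_all _ fun z => ?_))
  simp only [Pi.div_apply, Pi.mul_apply, Pi.sub_apply]
  ring

/-- **Lemma (first-order bias / double robustness in the missing data model).**
In the missing data model — `Z` has density `f` w.r.t. `ν`, `A, Y ∈ {0,1}` are
conditionally independent given `Z` with `P(A=1|Z) = 1/a(Z)` and `P(Y=1|Z) = b(Z)` —
for bounded measurable `ahat, bhat`:
`E[A·ahat(Z)(Y − bhat(Z)) + bhat(Z)] − E[b(Z)]
  = −E[((ahat−a)(bhat−b)/a)(Z)] = −∫ (ahat−a)(bhat−b) g dν` with `g = f/a`. -/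
theorem missing_data_double_robustness
    {Ω 𝒵 : Type*} [MeasurableSpace Ω] [MeasurableSpace 𝒵]
    (P : Measure Ω) [IsProbabilityMeasure P]
    (ν : Measure 𝒵) [SigmaFinite ν]
    (Z : Ω → 𝒵) (A Y : Ω → ℝ)
    (hZ : Measurable Z) (hAm : Measurable A) (hYm : Measurable Y)
    (hA01 : ∀ ω, A ω = 0 ∨ A ω = 1) (hY01 : ∀ ω, Y ω = 0 ∨ Y ω = 1)
    (a b f : 𝒵 → ℝ) (ham : Measurable a) (hbm : Measurable b) (hfm : Measurable f)
    (hf0 : ∀ z, 0 ≤ f z)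
    (ε : ℝ) (hε : 0 < ε)
    (ha : ∀ z, ε ≤ 1 / a z ∧ 1 / a z ≤ 1 - ε)
    (hb : ∀ z, ε ≤ b z ∧ b z ≤ 1 - ε)
    (hlaw : Measure.map Z P = ν.withDensity fun z => ENNReal.ofReal (f z))
    (hcondA : P[A|MeasurableSpace.comap Z inferInstance]
        =ᵐ[P] fun ω => 1 / a (Z ω))
    (hcondY : P[Y|MeasurableSpace.comap Z inferInstance]
        =ᵐ[P] fun ω => b (Z ω))
    (hcondAY : P[fun ω => A ω * Y ω|MeasurableSpace.comap Z inferInstance]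
        =ᵐ[P] fun ω => b (Z ω) / a (Z ω))
    (ahat bhat : 𝒵 → ℝ) (hahatm : Measurable ahat) (hbhatm : Measurable bhat)
    (M : ℝ) (hahatb : ∀ z, |ahat z| ≤ M) (hbhatb : ∀ z, |bhat z| ≤ M) :
    ((∫ ω, (A ω * ahat (Z ω) * (Y ω - bhat (Z ω)) + bhat (Z ω)) ∂P)
        - ∫ ω, b (Z ω) ∂P
      = - ∫ ω, (ahat (Z ω) - a (Z ω)) * (bhat (Z ω) - b (Z ω)) / a (Z ω) ∂P)
    ∧ ((∫ ω, (A ω * ahat (Z ω) * (Y ω - bhat (Z ω)) + bhat (Z ω)) ∂P)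
        - ∫ ω, b (Z ω) ∂P
      = - ∫ z, (ahat z - a z) * (bhat z - b z) * (f z / a z) ∂ν) :=
  missing_data_double_robustness_general P ν Z A Y hZ hAm hYm hA01 hY01 a b f ham hbm hfm hf0 ε hε
    ha hb hlaw hcondA hcondAY ahat bhat hahatm hbhatm M hahatb hbhatb
end

section
/- In the missing data model, let L be a closed subspace of L_2(g·dν) and let Π: Z×Z → ℝ be a symmetric measurable kernel representing the orthogonal projection onto L in L_2(g·dν), i.e. Π(z_1,·) ∈ L for every z_1 and ∫ Π(z_1,z) l(z) g(z) dν(z) = l(z_1) for every l ∈ L and every z_1. Fix a_1, y_1 ∈ {0,1} and z_1 ∈ Z, and define the second-order influence function χ^{(2)}(x_1, X) = −[ a_1 (y_1 − b(z_1)) · Π(z_1,Z) · (A a(Z) − 1) + (a_1 a(z_1) − 1) · Π(z_1,Z) · A (Y − b(Z)) ] and the score B(α,β,φ)(X) = −((A a(Z) − 1)/(a(Z)(a(Z) − 1))) α(Z) + (A (Y − b(Z))/(b(Z)(1 − b(Z)))) β(Z) + φ(Z). Then for every α ∈ L, β ∈ L, and every measurable φ with ∫ φ f dν = 0 for which the expectations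 exist, E[ χ^{(2)}(x_1, X) · B(α,β,φ)(X) ] = a_1 (y_1 − b(z_1)) α(z_1) − (a_1 a(z_1) − 1) β(z_1). -/
/-!
Since `A` and `Y` are `{0,1}`-valued, a function `F (YA) A Z` of the observation is affine in
`A` and `YA` with coefficients depending on `Z`, so its conditional expectation given `Z` is
obtained by substituting `1 / a(Z)` for `A` and `b(Z) / a(Z)` for `YA`. For `χ⁽²⁾ · B(α,β,φ)`
this yields `K(z₁,Z) (a₁(y₁ - b(z₁)) α(Z) - (a₁a(z₁) - 1) β(Z)) / a(Z)`; the `φ`-term drops out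
because `χ⁽²⁾` is conditionally centred given `Z`. Integrating against the law `f dν` of `Z`
turns `1 / a` into the weight `g = f / a`, and the reproducing property of `K` in `L₂(g dν)`
evaluates the integral at `z₁`.
-/

open MeasureTheory

theorem apply_mul_eq_affine_of_mem_zero_one (G : ℝ → ℝ → ℝ) {t y : ℝ} (ht : t = 0 ∨ t = 1)
    (hy : y = 0 ∨ y = 1) :
    G (t * y) t = G 0 0 + (G 0 1 - G 0 0) * t + (G 1 1 - G 0 1) * (t * y) := by
  rcases ht with rfl | rfl <;> rcases hy with rfl | rfl <;> simp

theorem mem_Icc_of_one_div_mem_Icc {x ε : ℝ} (hε : 0 < ε) (hx : 1 / x ∈ Set.Icc ε (1 - ε)) :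
    x ∈ Set.Icc (1 + ε) (1 / ε) := by
  obtain ⟨hlo, hhi⟩ := hx
  have hx₀ : 0 < x := one_div_pos.1 (hε.trans_le hlo)
  constructor
  · rw [div_le_iff₀ hx₀] at hhi
    have hx₁ : 1 ≤ x := by nlinarith [mul_pos hε hx₀]
    nlinarith [mul_le_mul_of_nonneg_left hx₁ hε.le]
  · rwa [le_div_iff₀ hε, mul_comm, ← le_div_iff₀ hx₀]

section Observation

variable {Ω 𝒵 : Type*} [MeasurableSpace Ω] [MeasurableSpace 𝒵] {P : Measure Ω} {Z : Ω → 𝒵}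

theorem condExp_comp_mul_of_condExp_eq {W : Ω → ℝ} {h w : 𝒵 → ℝ}
    (hh : Measurable h) (hhW : Integrable (fun ω => h (Z ω) * W ω) P) (hW : Integrable W P)
    (hcond : P[W|MeasurableSpace.comap Z inferInstance] =ᵐ[P] fun ω => w (Z ω)) :
    P[fun ω => h (Z ω) * W ω|MeasurableSpace.comap Z inferInstance]
      =ᵐ[P] fun ω => h (Z ω) * w (Z ω) := by
  have hhZ : StronglyMeasurable[MeasurableSpace.comap Z inferInstance] fun ω => h (Z ω) :=
    (hh.comp (comap_measurable Z)).stronglyMeasurable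
  filter_upwards [condExp_mul_of_stronglyMeasurable_left hhZ hhW hW, hcond] with ω hmul hW
  exact hmul.trans (by rw [Pi.mul_apply, hW])

/-- The expectation of `F (t * y) t z` when `(t, y)` follows the conditional law of `(A, Y)`
given `Z = z`, i.e. `P(A = 1) = 1 / a z` and `P(Y = 1) = b z` independently. -/
noncomputable def observationCondMean (a b : 𝒵 → ℝ) (F : ℝ → ℝ → 𝒵 → ℝ) (z : 𝒵) : ℝ :=
  (1 - 1 / a z) * F 0 0 z + (1 - b z) / a z * F 0 1 z + b z / a z * F 1 1 z

theorem condExp_comp_observation [IsFiniteMeasure P] (hZ : Measurable Z) {A Y : Ω → ℝ}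
    (hAm : Measurable A) (hYm : Measurable Y)
    (hA01 : ∀ ω, A ω = 0 ∨ A ω = 1) (hY01 : ∀ ω, Y ω = 0 ∨ Y ω = 1) {a b : 𝒵 → ℝ}
    (hcondA : P[A|MeasurableSpace.comap Z inferInstance] =ᵐ[P] fun ω => 1 / a (Z ω))
    (hcondAY : P[fun ω => A ω * Y ω|MeasurableSpace.comap Z inferInstance]
        =ᵐ[P] fun ω => b (Z ω) / a (Z ω))
    {F : ℝ → ℝ → 𝒵 → ℝ} (hFm : ∀ s t, Measurable (F s t))
    (hFi : ∀ s t, Integrable (fun ω => F s t (Z ω)) P) :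
    P[fun ω => F (A ω * Y ω) (A ω) (Z ω)|MeasurableSpace.comap Z inferInstance]
      =ᵐ[P] fun ω => observationCondMean a b F (Z ω) := by
  have hAY : ∀ ω, A ω * Y ω = 0 ∨ A ω * Y ω = 1 := fun ω => by
    rcases hA01 ω with h | h <;> rcases hY01 ω with h' | h' <;> simp [h, h']
  have hbdd {W : Ω → ℝ} (hWm : Measurable W) (hW : ∀ ω, W ω = 0 ∨ W ω = 1) :
      MemLp W ⊤ P :=
    memLp_top_of_bound hWm.aestronglyMeasurable 1
      (ae_of_all _ fun ω => by rcases hW ω with h | h <;> simp [h])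
  have hAi := (hbdd hAm hA01).integrable le_top
  have hAYi := (hbdd (hAm.mul hYm) hAY).integrable le_top
  have hh₁i : Integrable (fun ω => (F 0 1 - F 0 0) (Z ω) * A ω) P :=
    ((hFi 0 1).sub (hFi 0 0)).mul_of_top_left (hbdd hAm hA01)
  have hh₂i : Integrable (fun ω => (F 1 1 - F 0 1) (Z ω) * (A ω * Y ω)) P :=
    ((hFi 1 1).sub (hFi 0 1)).mul_of_top_left (hbdd (hAm.mul hYm) hAY)
  have hdecomp : (fun ω => F (A ω * Y ω) (A ω) (Z ω))
      = (fun ω => F 0 0 (Z ω)) + (fun ω => (F 0 1 - F 0 0) (Z ω) * A ω)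
        + fun ω => (F 1 1 - F 0 1) (Z ω) * (A ω * Y ω) := by
    funext ω
    exact apply_mul_eq_affine_of_mem_zero_one (fun s t => F s t (Z ω)) (hA01 ω) (hY01 ω)
  have hF₀ : P[fun ω => F 0 0 (Z ω)|MeasurableSpace.comap Z inferInstance]
      = fun ω => F 0 0 (Z ω) :=
    condExp_of_stronglyMeasurable hZ.comap_le
      ((hFm 0 0).comp (comap_measurable Z)).stronglyMeasurable (hFi 0 0)
  rw [hdecomp]
  filter_upwards [condExp_add ((hFi 0 0).add hh₁i) hh₂i _, condExp_add (hFi 0 0) hh₁i _,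
    condExp_comp_mul_of_condExp_eq (w := fun z => 1 / a z) ((hFm 0 1).sub (hFm 0 0)) hh₁i hAi
      hcondA,
    condExp_comp_mul_of_condExp_eq (w := fun z => b z / a z) ((hFm 1 1).sub (hFm 0 1)) hh₂i hAYi
      hcondAY] with ω h h' h₁ h₂
  simp only [Pi.add_apply] at h h'
  rw [h, h', hF₀, h₁, h₂, observationCondMean, Pi.sub_apply, Pi.sub_apply]
  ring

theorem integral_comp_eq_integral_mul_density {ν : Measure 𝒵} (hZ : Measurable Z) {f : 𝒵 → ℝ}
    (hfm : Measurable f) (hf0 : ∀ z, 0 ≤ f z)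
    (hlaw : P.map Z = ν.withDensity fun z => ENNReal.ofReal (f z))
    {q : 𝒵 → ℝ} (hq : Measurable q) :
    ∫ ω, q (Z ω) ∂P = ∫ z, q z * f z ∂ν := by
  rw [← integral_map hZ.aemeasurable hq.aestronglyMeasurable, hlaw,
    integral_withDensity_eq_integral_toReal_smul hfm.ennreal_ofReal
      (ae_of_all _ fun _ => ENNReal.ofReal_lt_top)]
  simp only [ENNReal.toReal_ofReal (hf0 _), smul_eq_mul, mul_comm]

theorem memLp_top_comp_of_abs_le (hZ : Measurable Z) {g : 𝒵 → ℝ} (hg : Measurable g) {C : ℝ}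
    (hC : ∀ z, |g z| ≤ C) : MemLp (fun ω => g (Z ω)) ⊤ P :=
  memLp_top_of_bound (hg.comp hZ).aestronglyMeasurable C (ae_of_all _ fun ω => hC (Z ω))

theorem memLp_top_comp_one_div_of_le (hZ : Measurable Z) {g : 𝒵 → ℝ} (hg : Measurable g)
    {δ : ℝ} (hδ : 0 < δ) (hgδ : ∀ z, δ ≤ g z) : MemLp (fun ω => 1 / g (Z ω)) ⊤ P :=
  memLp_top_comp_of_abs_le hZ (hg.const_div 1) fun z => by
    rw [abs_of_pos (one_div_pos.2 (hδ.trans_le (hgδ z)))]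
    exact one_div_le_one_div_of_le hδ (hgδ z)

theorem memLp_top_comp_of_one_div_mem_Icc (hZ : Measurable Z) {a : 𝒵 → ℝ} (ham : Measurable a)
    {ε : ℝ} (hε : 0 < ε) (ha : ∀ z, 1 / a z ∈ Set.Icc ε (1 - ε)) :
    MemLp (fun ω => a (Z ω)) ⊤ P ∧ MemLp (fun ω => 1 / (a (Z ω) * (a (Z ω) - 1))) ⊤ P := by
  have ha' z := mem_Icc_of_one_div_mem_Icc hε (ha z)
  refine ⟨memLp_top_comp_of_abs_le hZ ham (C := 1 / ε) fun z => ?_,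
    memLp_top_comp_one_div_of_le hZ (g := fun z => a z * (a z - 1)) (by fun_prop) hε fun z => ?_⟩
  · rw [abs_of_pos (by linarith [(ha' z).1])]
    exact (ha' z).2
  · nlinarith [(ha' z).1, hε]

theorem memLp_top_comp_of_mem_Icc (hZ : Measurable Z) {b : 𝒵 → ℝ} (hbm : Measurable b)
    {ε : ℝ} (hε : 0 < ε) (hb : ∀ z, b z ∈ Set.Icc ε (1 - ε)) :
    MemLp (fun ω => b (Z ω)) ⊤ P ∧ MemLp (fun ω => 1 / (b (Z ω) * (1 - b (Z ω)))) ⊤ P := by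
  refine ⟨memLp_top_comp_of_abs_le hZ hbm (C := 1) fun z => ?_,
    memLp_top_comp_one_div_of_le hZ (g := fun z => b z * (1 - b z)) (δ := ε * ε) (by fun_prop)
      (by positivity) fun z => ?_⟩
  · rw [abs_le]
    constructor <;> linarith [(hb z).1, (hb z).2]
  · nlinarith [(hb z).1, (hb z).2]

end Observation

section MissingData

variable {𝒵 : Type*}

/-- `χ⁽²⁾(x₁, ·)` at the observation `(s, t, z) = (YA, A, Z)`, where `c₁ = a₁ (y₁ - b z₁)`,
`c₂ = a₁ a z₁ - 1` and `k = K z₁`. -/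
def secondOrderIF (c₁ c₂ : ℝ) (k a b : 𝒵 → ℝ) (s t : ℝ) (z : 𝒵) : ℝ :=
  -(c₁ * k z * (t * a z - 1) + c₂ * k z * (s - t * b z))

/-- The score `B(α, β, φ)` at the observation `(s, t, z) = (YA, A, Z)`. -/
noncomputable def missingDataScore (a b α β φ : 𝒵 → ℝ) (s t : ℝ) (z : 𝒵) : ℝ :=
  -((t * a z - 1) / (a z * (a z - 1))) * α z + (s - t * b z) / (b z * (1 - b z)) * β z + φ z

theorem observationCondMean_secondOrderIF_mul_missingDataScore (c₁ c₂ : ℝ) {k a b : 𝒵 → ℝ}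
    (α β φ : 𝒵 → ℝ) {z : 𝒵} (ha : 1 < a z) (hb : b z ∈ Set.Ioo 0 1) :
    observationCondMean a b (fun s t z => secondOrderIF c₁ c₂ k a b s t z
        * missingDataScore a b α β φ s t z) z
      = k z * (c₁ * α z - c₂ * β z) * (1 / a z) := by
  have ha₀ : a z ≠ 0 := by positivity
  have ha₁ : a z - 1 ≠ 0 := sub_ne_zero.2 ha.ne'
  have hb₀ : b z ≠ 0 := hb.1.ne'
  have hb₁ : 1 - b z ≠ 0 := sub_ne_zero.2 hb.2.ne'
  simp only [observationCondMean, secondOrderIF, missingDataScore]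
  field_simp
  ring

theorem integrable_secondOrderIF_mul_missingDataScore {Ω : Type*} [MeasurableSpace Ω]
    {P : Measure Ω} [IsFiniteMeasure P] {Z : Ω → 𝒵} (c₁ c₂ : ℝ)
    {k a b α β φ : 𝒵 → ℝ} (hk : MemLp (fun ω => k (Z ω)) 2 P)
    (hα : MemLp (fun ω => α (Z ω)) 2 P) (hβ : MemLp (fun ω => β (Z ω)) 2 P)
    (hφ : MemLp (fun ω => φ (Z ω)) 2 P) (ha : MemLp (fun ω => a (Z ω)) ⊤ P)
    (hb : MemLp (fun ω => b (Z ω)) ⊤ P)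
    (haa : MemLp (fun ω => 1 / (a (Z ω) * (a (Z ω) - 1))) ⊤ P)
    (hbb : MemLp (fun ω => 1 / (b (Z ω) * (1 - b (Z ω)))) ⊤ P) (s t : ℝ) :
    Integrable (fun ω => secondOrderIF c₁ c₂ k a b s t (Z ω)
      * missingDataScore a b α β φ s t (Z ω)) P := by
  have hta : MemLp (fun ω => t * a (Z ω) - 1) ⊤ P := (ha.const_mul t).sub (memLp_const 1)
  have hstb : MemLp (fun ω => s - t * b (Z ω)) ⊤ P := (memLp_const s).sub (hb.const_mul t)
  have hχ : MemLp (fun ω => secondOrderIF c₁ c₂ k a b s t (Z ω)) 2 P := by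
    refine (hk.mul' ((hta.const_mul c₁).add (hstb.const_mul c₂)).neg).ae_eq
      (ae_of_all _ fun ω => ?_)
    simp only [secondOrderIF, Pi.neg_apply, Pi.add_apply]
    ring
  have hB : MemLp (fun ω => missingDataScore a b α β φ s t (Z ω)) 2 P := by
    refine ((hα.mul' (haa.mul' hta (r := ⊤)).neg).add (hβ.mul' (hbb.mul' hstb (r := ⊤)))).add hφ
      |>.ae_eq (ae_of_all _ fun ω => ?_)
    simp only [missingDataScore, Pi.neg_apply, Pi.add_apply]
    ring
  exact hχ.integrable_mul hB

end MissingData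

theorem second_order_influence_function_representation_general
    {Ω 𝒵 : Type*} [MeasurableSpace Ω] [MeasurableSpace 𝒵]
    (P : Measure Ω) [IsProbabilityMeasure P]
    (ν : Measure 𝒵)
    (Z : Ω → 𝒵) (A Y : Ω → ℝ)
    (hZ : Measurable Z) (hAm : Measurable A) (hYm : Measurable Y)
    (hA01 : ∀ ω, A ω = 0 ∨ A ω = 1) (hY01 : ∀ ω, Y ω = 0 ∨ Y ω = 1)
    (a b f : 𝒵 → ℝ) (ham : Measurable a) (hbm : Measurable b) (hfm : Measurable f)
    (hf0 : ∀ z, 0 ≤ f z)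
    (ε : ℝ) (hε : 0 < ε)
    (ha : ∀ z, ε ≤ 1 / a z ∧ 1 / a z ≤ 1 - ε)
    (hb : ∀ z, ε ≤ b z ∧ b z ≤ 1 - ε)
    (hlaw : Measure.map Z P = ν.withDensity fun z => ENNReal.ofReal (f z))
    (hcondA : P[A|MeasurableSpace.comap Z inferInstance]
        =ᵐ[P] fun ω => 1 / a (Z ω))
    (hcondAY : P[fun ω => A ω * Y ω|MeasurableSpace.comap Z inferInstance]
        =ᵐ[P] fun ω => b (Z ω) / a (Z ω))
    (L : Submodule ℝ (𝒵 → ℝ))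
    (K : 𝒵 → 𝒵 → ℝ) (hKm : Measurable (Function.uncurry K))
    (hKrep : ∀ l ∈ L, ∀ z₁, ∫ z, K z₁ z * l z * (f z / a z) ∂ν = l z₁)
    (a₁ y₁ : ℝ) (z₁ : 𝒵)
    (α β φ : 𝒵 → ℝ) (hαm : Measurable α) (hβm : Measurable β) (hφm : Measurable φ)
    (hαL : α ∈ L) (hβL : β ∈ L)
    (hαi : MemLp (fun ω => α (Z ω)) 2 P)
    (hβi : MemLp (fun ω => β (Z ω)) 2 P)
    (hφi : MemLp (fun ω => φ (Z ω)) 2 P)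
    (hKi : MemLp (fun ω => K z₁ (Z ω)) 2 P) :
    ∫ ω,
        (-(a₁ * (y₁ - b z₁) * (K z₁ (Z ω)) * (A ω * a (Z ω) - 1)
            + (a₁ * a z₁ - 1) * (K z₁ (Z ω)) * (A ω * (Y ω - b (Z ω)))))
          * (-((A ω * a (Z ω) - 1) / (a (Z ω) * (a (Z ω) - 1))) * α (Z ω)
              + (A ω * (Y ω - b (Z ω)) / (b (Z ω) * (1 - b (Z ω)))) * β (Z ω)
              + φ (Z ω)) ∂P
      = a₁ * (y₁ - b z₁) * α z₁ - (a₁ * a z₁ - 1) * β z₁ := by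
  set c₁ := a₁ * (y₁ - b z₁)
  set c₂ := a₁ * a z₁ - 1
  set F := fun s t z => secondOrderIF c₁ c₂ (K z₁) a b s t z * missingDataScore a b α β φ s t z
  have hkm : Measurable (K z₁) := hKm.comp measurable_prodMk_left
  have hFm : ∀ s t, Measurable (F s t) := fun s t => by
    simp only [F, secondOrderIF, missingDataScore]; fun_prop
  obtain ⟨haZ, haaZ⟩ := memLp_top_comp_of_one_div_mem_Icc (P := P) hZ ham hε ha
  obtain ⟨hbZ, hbbZ⟩ := memLp_top_comp_of_mem_Icc (P := P) hZ hbm hε hb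
  have hFi : ∀ s t, Integrable (fun ω => F s t (Z ω)) P :=
    integrable_secondOrderIF_mul_missingDataScore c₁ c₂ hKi hαi hβi hφi haZ hbZ haaZ hbbZ
  have hmean z : observationCondMean a b F z = K z₁ z * (c₁ * α z - c₂ * β z) * (1 / a z) :=
    observationCondMean_secondOrderIF_mul_missingDataScore c₁ c₂ α β φ
      (by linarith [(mem_Icc_of_one_div_mem_Icc hε (ha z)).1, hε])
      ⟨by linarith [hb z], by linarith [hb z]⟩
  have hlin : (fun z => c₁ * α z - c₂ * β z) ∈ L :=
    L.sub_mem (L.smul_mem c₁ hαL) (L.smul_mem c₂ hβL)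
  calc _ = ∫ ω, F (A ω * Y ω) (A ω) (Z ω) ∂P := by
        congr 1; funext ω; simp only [F, secondOrderIF, missingDataScore]; ring
    _ = ∫ ω, observationCondMean a b F (Z ω) ∂P := by
        rw [← integral_condExp hZ.comap_le]
        exact integral_congr_ae
          (condExp_comp_observation hZ hAm hYm hA01 hY01 hcondA hcondAY hFm hFi)
    _ = ∫ z, K z₁ z * (c₁ * α z - c₂ * β z) * (1 / a z) * f z ∂ν := by
        simp only [hmean]
        exact integral_comp_eq_integral_mul_density hZ hfm hf0 hlaw
          (q := fun z => K z₁ z * (c₁ * α z - c₂ * β z) * (1 / a z)) (by fun_prop)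
    _ = c₁ * α z₁ - c₂ * β z₁ := by
        rw [← hKrep _ hlin z₁]
        congr 1; funext z; ring

/-- **Lemma (second-order influence function representation in the missing data model).**
Let `K` be a symmetric kernel representing the orthogonal projection onto a closed
subspace `L` of `L₂(g·dν)` (`g = f/a`), i.e. `K(z₁,·) ∈ L` and
`∫ K(z₁,z) l(z) g(z) dν(z) = l(z₁)` for all `l ∈ L`. With
`χ⁽²⁾(x₁,X) = −[a₁(y₁−b(z₁)) K(z₁,Z)(A a(Z)−1) + (a₁ a(z₁)−1) K(z₁,Z) A(Y−b(Z))]` and the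
score `B(α,β,φ)(X)`, one has for `α, β ∈ L` and `φ` with `∫ φ f dν = 0`:
`E[χ⁽²⁾(x₁,X) B(α,β,φ)(X)] = a₁(y₁−b(z₁)) α(z₁) − (a₁ a(z₁)−1) β(z₁)`. -/
theorem second_order_influence_function_representation
    {Ω 𝒵 : Type*} [MeasurableSpace Ω] [MeasurableSpace 𝒵]
    (P : Measure Ω) [IsProbabilityMeasure P]
    (ν : Measure 𝒵) [SigmaFinite ν]
    (Z : Ω → 𝒵) (A Y : Ω → ℝ)
    (hZ : Measurable Z) (hAm : Measurable A) (hYm : Measurable Y)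
    (hA01 : ∀ ω, A ω = 0 ∨ A ω = 1) (hY01 : ∀ ω, Y ω = 0 ∨ Y ω = 1)
    (a b f : 𝒵 → ℝ) (ham : Measurable a) (hbm : Measurable b) (hfm : Measurable f)
    (hf0 : ∀ z, 0 ≤ f z)
    (ε : ℝ) (hε : 0 < ε)
    (ha : ∀ z, ε ≤ 1 / a z ∧ 1 / a z ≤ 1 - ε)
    (hb : ∀ z, ε ≤ b z ∧ b z ≤ 1 - ε)
    (hlaw : Measure.map Z P = ν.withDensity fun z => ENNReal.ofReal (f z))
    (hcondA : P[A|MeasurableSpace.comap Z inferInstance]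
        =ᵐ[P] fun ω => 1 / a (Z ω))
    (hcondY : P[Y|MeasurableSpace.comap Z inferInstance]
        =ᵐ[P] fun ω => b (Z ω))
    (hcondAY : P[fun ω => A ω * Y ω|MeasurableSpace.comap Z inferInstance]
        =ᵐ[P] fun ω => b (Z ω) / a (Z ω))
    (L : Submodule ℝ (𝒵 → ℝ))
    (K : 𝒵 → 𝒵 → ℝ) (hKm : Measurable (Function.uncurry K))
    (hKsym : ∀ z₁ z₂, K z₁ z₂ = K z₂ z₁)
    (hKL : ∀ z₁, (fun z => K z₁ z) ∈ L)
    (hKrep : ∀ l ∈ L, ∀ z₁, ∫ z, K z₁ z * l z * (f z / a z) ∂ν = l z₁)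
    (a₁ y₁ : ℝ) (ha₁ : a₁ = 0 ∨ a₁ = 1) (hy₁ : y₁ = 0 ∨ y₁ = 1) (z₁ : 𝒵)
    (α β φ : 𝒵 → ℝ) (hαm : Measurable α) (hβm : Measurable β) (hφm : Measurable φ)
    (hαL : α ∈ L) (hβL : β ∈ L)
    (hφ0 : ∫ z, φ z * f z ∂ν = 0)
    (hαi : MemLp (fun ω => α (Z ω)) 2 P)
    (hβi : MemLp (fun ω => β (Z ω)) 2 P)
    (hφi : MemLp (fun ω => φ (Z ω)) 2 P)
    (hKi : MemLp (fun ω => K z₁ (Z ω)) 2 P) :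
    ∫ ω,
        (-(a₁ * (y₁ - b z₁) * (K z₁ (Z ω)) * (A ω * a (Z ω) - 1)
            + (a₁ * a z₁ - 1) * (K z₁ (Z ω)) * (A ω * (Y ω - b (Z ω)))))
          * (-((A ω * a (Z ω) - 1) / (a (Z ω) * (a (Z ω) - 1))) * α (Z ω)
              + (A ω * (Y ω - b (Z ω)) / (b (Z ω) * (1 - b (Z ω)))) * β (Z ω)
              + φ (Z ω)) ∂P
      = a₁ * (y₁ - b z₁) * α z₁ - (a₁ * a z₁ - 1) * β z₁ :=
  second_order_influence_function_representation_general P ν Z A Y hZ hAm hYm hA01 hY01 a b f ham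
    hbm hfm hf0 ε hε ha hb hlaw hcondA hcondAY L K hKm hKrep a₁ y₁ z₁ α β φ hαm hβm hφm hαL hβL hαi
    hβi hφi hKi
end
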